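/- arXiv:2011.05306 — 7 statements merged into one kernel-verified Lean document; each statement's English description precedes it below -/
import Mathlib

section
/- For every integer g ≥ 1 one has a_{g,0} = a_{g,3g−1} = 1 and a_{g,1} = a_{g,3g−2} = 1 − 2/(6g−1), and for every integer k with 2 ≤ k ≤ 3g−3 the strict inequalities 1 − 2/(6g−1) < a_{g,k} < 1 hold. -/
/-!
The increments of `k ↦ a_{g,k}` come in blocks of three: for `k = 3j, 3j+1, 3j+2` they are
`-T_j < 0`, `P_j > 0` and `Q_j ≥ 0`, where `T_j, P_j, Q_j` are explicit products of double
factorials and a binomial coefficient. Comparing consecutive ratios gives `P_j + Q_j < T_j` and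
`T_{j+1} < P_j`. The first inequality says that every `a_{3j+r}` (`r = 1, 2, 3`) lies strictly
below `a_{3j}`, so on the first half of the range everything after `a_0 = 1` is `< 1`; the second
says that every `a_{3j+1+r}` lies strictly above `a_{3j+1}`, so everything after `a_1` is `> a_1`.
The symmetry `a_k = a_{3g-1-k}` transfers both bounds to the second half.
-/
open Nat Real Filter


/-- The piecewise quantity `D(g,k)` from the recurrence for normalized
2-correlators: `D(g,k)` depends on the residue of `k` mod 3, with `k = 3j-1`,
`k = 3j`, or `k = 3j+1` respectively. -/
noncomputable def Dterm (g k : ℕ) : ℚ :=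
  if k % 3 = 2 then
    -- k = 3j - 1, with j = (k+1)/3
    ((6 * ((k + 1) / 3) - 1)‼ : ℚ) / (((k + 1) / 3)! : ℚ) *
      (((g - 1)! : ℚ) / ((g - (k + 1) / 3)! : ℚ)) * ((g : ℚ) - 2 * ((k + 1) / 3))
  else if k % 3 = 0 then
    -- k = 3j, with j = k/3
    -2 * ((6 * (k / 3) + 1)‼ : ℚ) / ((k / 3)! : ℚ) *
      (((g - 1)! : ℚ) / ((g - 1 - k / 3)! : ℚ))
  else
    -- k = 3j + 1, with j = (k-1)/3
    2 * ((6 * ((k - 1) / 3) + 3)‼ : ℚ) / (((k - 1) / 3)! : ℚ) *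
      (((g - 1)! : ℚ) / ((g - 1 - (k - 1) / 3)! : ℚ))

/-- `a : ℕ → ℚ` is the sequence `(a_{g,k})_{0 ≤ k ≤ 3g-1}` of normalized
2-correlators: `a 0 = 1`, the recurrence
`a (k+1) - a k = ((6g-3-2k)‼/(6g-1)‼) · D(g,k)` for `0 ≤ k ≤ ⌊(3g-1)/2⌋ - 1`,
and the symmetry `a k = a (3g-1-k)` for `0 ≤ k ≤ 3g-1`. -/
def IsCorr (g : ℕ) (a : ℕ → ℚ) : Prop :=
  a 0 = 1 ∧
  (∀ k : ℕ, k + 1 ≤ (3 * g - 1) / 2 →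
    a (k + 1) - a k = ((6 * g - 3 - 2 * k)‼ : ℚ) / ((6 * g - 1)‼ : ℚ) * Dterm g k) ∧
  (∀ k : ℕ, k ≤ 3 * g - 1 → a k = a (3 * g - 1 - k))

/-- `R(g,j) = C(3g,3j)·C(g,j)/C(6g,6j)`. -/
noncomputable def R (g j : ℕ) : ℚ :=
  (((3 * g).choose (3 * j) : ℚ) * (g.choose j : ℚ)) / ((6 * g).choose (6 * j) : ℚ)

/-- Riemann zeta value `ζ(s) = Σ_{n ≥ 1} n⁻ˢ` as a real number. -/
noncomputable def zetaR (s : ℕ) : ℝ := ∑' n : ℕ, (1 : ℝ) / (n + 1) ^ s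

/-- `V1(g) = Vol(Γ₁(g))`, the contribution of one-cylinder square-tiled
surfaces with nonseparating waist curve to the Masur–Veech volume `Vol 𝒬_g`,
expressed via the sequence `a` of normalized 2-correlators. -/
noncomputable def V1 (a : ℕ → ℕ → ℚ) (g : ℕ) : ℝ :=
  zetaR (6 * g - 6) * ((4 * g - 4).choose (g - 1) : ℝ) *
    (2 / (3 ^ (g - 1) * 2 ^ (2 * g - 2))) *
    ∑ k ∈ Finset.range (3 * g - 3), ((6 * g - 6).choose (2 * k + 1) : ℝ) * (a (g - 1) k : ℝ)

/-- `S(g) = Σ_{g₁=1}^{g-1} C(g,g₁)·C(3g-4,3g₁-2)`. -/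
def S (g : ℕ) : ℕ :=
  ∑ g₁ ∈ Finset.Icc 1 (g - 1), g.choose g₁ * (3 * g - 4).choose (3 * g₁ - 2)

/-- `W(g) = 2·ζ(6g-6)·C(4g-4,g)·12⁻ᵍ·S(g)`, the total contribution of
one-cylinder square-tiled surfaces with separating waist curve. -/
noncomputable def W (g : ℕ) : ℝ :=
  2 * zetaR (6 * g - 6) * ((4 * g - 4).choose g : ℝ) * (12 : ℝ)⁻¹ ^ g * (S g : ℝ)

theorem lt_apply_zero_of_lt_apply_mul {α : Type*} [Preorder α] {b : ℕ → α} {p N : ℕ}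
    (hp : 0 < p)
    (h : ∀ j r, 0 < r → r ≤ p → p * j + r ≤ N → b (p * j + r) < b (p * j)) :
    ∀ k, 0 < k → k ≤ N → b k < b 0 := by
  intro k
  induction k using Nat.strong_induction_on with
  | _ k ih =>
    intro hk hkN
    obtain ⟨j, r, hr, hrp, rfl⟩ : ∃ j r, 0 < r ∧ r ≤ p ∧ k = p * j + r :=
      ⟨(k - 1) / p, (k - 1) % p + 1, by omega, Nat.mod_lt _ hp, by
        have := Nat.div_add_mod (k - 1) p; omega⟩
    refine (h j r hr hrp hkN).trans_le ?_
    rcases Nat.eq_zero_or_pos j with rfl | hj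
    · simp
    · exact (ih (p * j) (by omega) (by positivity) (by omega)).le

noncomputable def weight (g k : ℕ) : ℚ :=
  ((2 * k + 1)‼ * (6 * g - 3 - 2 * k)‼ : ℕ) / ((6 * g - 1)‼ : ℕ)

theorem weight_pos (g k : ℕ) : 0 < weight g k := by
  unfold weight; positivity

theorem weight_zero {g : ℕ} (hg : 1 ≤ g) : weight g 0 = 1 / (6 * g - 1) := by
  have h : (6 * g - 1)‼ = (6 * g - 1) * (6 * g - 3)‼ := by
    rw [show 6 * g - 1 = 6 * g - 3 + 2 by omega, Nat.doubleFactorial_add_two]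
  have hcast : ((6 * g - 1 : ℕ) : ℚ) = 6 * g - 1 := by
    rw [Nat.cast_sub (by omega)]; push_cast; ring
  have : ((6 * g - 3)‼ : ℚ) ≠ 0 := by positivity
  rw [weight, h, Nat.mul_zero, Nat.sub_zero, show (2 * 0 + 1)‼ = 1 from rfl]
  push_cast [hcast]
  field_simp

theorem weight_succ {g k : ℕ} (hk : 2 * k + 5 ≤ 6 * g) :
    weight g (k + 1) = (2 * k + 3) / (6 * g - 3 - 2 * k) * weight g k := by
  have h₁ : (2 * (k + 1) + 1)‼ = (2 * k + 3) * (2 * k + 1)‼ := Nat.doubleFactorial_add_two _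
  have h₂ : (6 * g - 3 - 2 * k)‼ = (6 * g - 3 - 2 * k) * (6 * g - 3 - 2 * (k + 1))‼ := by
    rw [show 6 * g - 3 - 2 * k = 6 * g - 3 - 2 * (k + 1) + 2 by omega, Nat.doubleFactorial_add_two]
  have hcast : ((6 * g - 3 - 2 * k : ℕ) : ℚ) = 6 * g - 3 - 2 * k := by
    rw [Nat.cast_sub (by omega), Nat.cast_sub (by omega)]; push_cast; ring
  have : (6 * g - 3 - 2 * k : ℚ) ≠ 0 := by rw [← hcast]; exact_mod_cast (by omega)
  rw [weight, weight, h₁, h₂]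
  push_cast [hcast]
  field_simp

noncomputable def incr (g k : ℕ) : ℚ :=
  ((6 * g - 3 - 2 * k)‼ : ℚ) / ((6 * g - 1)‼ : ℚ) * Dterm g k

theorem incr_three_mul {g j : ℕ} (hj : j < g) :
    incr g (3 * j) = -(2 * (g - 1).choose j * weight g (3 * j)) := by
  rw [incr, Dterm, if_neg (by omega), if_pos (by omega), Nat.mul_div_cancel_left j (by norm_num),
    weight, Nat.cast_choose ℚ (by omega : j ≤ g - 1),
    show 6 * g - 3 - 2 * (3 * j) = 6 * g - 3 - 6 * j by omega,
    show 2 * (3 * j) + 1 = 6 * j + 1 by ring]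
  push_cast
  field_simp

theorem incr_three_mul_add_one {g j : ℕ} (hj : j < g) :
    incr g (3 * j + 1) = 2 * (g - 1).choose j * weight g (3 * j + 1) := by
  rw [incr, Dterm, if_neg (by omega), if_neg (by omega), show (3 * j + 1 - 1) / 3 = j by omega,
    weight, Nat.cast_choose ℚ (by omega : j ≤ g - 1),
    show 2 * (3 * j + 1) + 1 = 6 * j + 3 by ring]
  push_cast
  field_simp

theorem incr_three_mul_add_two {g j : ℕ} (hj : j < g) :
    incr g (3 * j + 2) =
      (g - 1).choose j * ((g - 2 * j - 2) / (j + 1)) * weight g (3 * j + 2) := by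
  rw [incr, Dterm, if_pos (by omega), show (3 * j + 2 + 1) / 3 = j + 1 by omega,
    weight, Nat.cast_choose ℚ (by omega : j ≤ g - 1),
    show 2 * (3 * j + 2) + 1 = 6 * (j + 1) - 1 by omega,
    show g - (j + 1) = g - 1 - j by omega, Nat.factorial_succ]
  push_cast
  field_simp
  ring

theorem incr_three_mul_neg {g j : ℕ} (hj : j < g) : incr g (3 * j) < 0 := by
  have := weight_pos g (3 * j)
  have : (0 : ℚ) < (g - 1).choose j := by exact_mod_cast Nat.choose_pos (by omega)
  rw [incr_three_mul hj, neg_lt_zero]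
  positivity

theorem incr_three_mul_add_one_pos {g j : ℕ} (hj : j < g) : 0 < incr g (3 * j + 1) := by
  have := weight_pos g (3 * j + 1)
  have : (0 : ℚ) < (g - 1).choose j := by exact_mod_cast Nat.choose_pos (by omega)
  rw [incr_three_mul_add_one hj]
  positivity

theorem incr_three_mul_add_two_nonneg {g j : ℕ} (hj : 2 * j + 2 ≤ g) :
    0 ≤ incr g (3 * j + 2) := by
  have := weight_pos g (3 * j + 2)
  have : (0 : ℚ) ≤ g - 2 * j - 2 := by
    rw [sub_sub, sub_nonneg]; exact_mod_cast hj
  rw [incr_three_mul_add_two (by omega)]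
  positivity

theorem incr_three_mul_add_one_add_incr_lt_neg {g j : ℕ} (hj : 2 * j + 2 ≤ g) :
    incr g (3 * j + 1) + incr g (3 * j + 2) < -incr g (3 * j) := by
  have hg : (2 * j + 2 : ℚ) ≤ g := by exact_mod_cast hj
  have hA : (0 : ℚ) < 6 * g - 3 - 6 * j := by linarith
  have hC : (0 : ℚ) < 6 * g - 5 - 6 * j := by linarith
  have hratio : 2 * ((6 * j + 3) / (6 * g - 3 - 6 * j)) + (g - 2 * j - 2) / (j + 1) *
      ((6 * j + 5) / (6 * g - 5 - 6 * j) * ((6 * j + 3) / (6 * g - 3 - 6 * j))) < (2 : ℚ) := by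
    have hx : (0 : ℚ) ≤ j := by positivity
    have ht : (0 : ℚ) ≤ g - 2 * j - 2 := by linarith
    field_simp
    nlinarith [mul_nonneg (mul_nonneg hx ht) ht, mul_nonneg (mul_nonneg hx hx) ht,
      mul_nonneg hx ht, mul_nonneg ht ht]
  have hw := weight_pos g (3 * j)
  have hc : (0 : ℚ) < (g - 1).choose j := by exact_mod_cast Nat.choose_pos (by omega)
  have hw₁ : weight g (3 * j + 1) = (6 * j + 3) / (6 * g - 3 - 6 * j) * weight g (3 * j) := by
    rw [weight_succ (by omega)]; push_cast; ring_nf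
  have hw₂ : weight g (3 * j + 2) = (6 * j + 5) / (6 * g - 5 - 6 * j) * weight g (3 * j + 1) := by
    rw [weight_succ (k := 3 * j + 1) (by omega)]; push_cast; ring_nf
  rw [incr_three_mul (by omega), incr_three_mul_add_one (by omega),
    incr_three_mul_add_two (by omega), neg_neg, hw₂, hw₁]
  calc _ = (g - 1).choose j * weight g (3 * j) * (2 * ((6 * j + 3) / (6 * g - 3 - 6 * j)) +
        (g - 2 * j - 2) / (j + 1) *
          ((6 * j + 5) / (6 * g - 5 - 6 * j) * ((6 * j + 3) / (6 * g - 3 - 6 * j)))) := by ring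
    _ < (g - 1).choose j * weight g (3 * j) * 2 := mul_lt_mul_of_pos_left hratio (by positivity)
    _ = _ := by ring

theorem neg_incr_three_mul_add_three_lt {g j : ℕ} (hj : 2 * j + 3 ≤ g) :
    -incr g (3 * j + 3) < incr g (3 * j + 1) := by
  have hg : (2 * j + 3 : ℚ) ≤ g := by exact_mod_cast hj
  have hratio : (g - 1 - j) / (j + 1) *
      ((6 * j + 7) / (6 * g - 7 - 6 * j) * ((6 * j + 5) / (6 * g - 5 - 6 * j))) < (1 : ℚ) := by
    have hx : (0 : ℚ) ≤ j := by positivity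
    have ht : (0 : ℚ) ≤ g - 2 * j - 3 := by linarith
    have : (0 : ℚ) < 6 * g - 7 - 6 * j := by linarith
    have : (0 : ℚ) < 6 * g - 5 - 6 * j := by linarith
    rw [← mul_assoc, _root_.div_mul_div_comm, _root_.div_mul_div_comm, div_lt_one (by positivity)]
    nlinarith [mul_nonneg (mul_nonneg hx ht) ht, mul_nonneg (mul_nonneg hx hx) ht,
      mul_nonneg hx ht, mul_nonneg ht ht]
  have hchoose : ((g - 1).choose (j + 1) : ℚ) = (g - 1 - j) / (j + 1) * (g - 1).choose j := by
    have h := Nat.choose_succ_right_eq (g - 1) j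
    rw [Nat.sub_sub, ← Nat.cast_inj (R := ℚ)] at h
    push_cast [Nat.cast_sub (show 1 + j ≤ g by omega)] at h
    field_simp
    linear_combination h
  have hw₂ : weight g (3 * j + 2) = (6 * j + 5) / (6 * g - 5 - 6 * j) * weight g (3 * j + 1) := by
    rw [weight_succ (k := 3 * j + 1) (by omega)]; push_cast; ring_nf
  have hw₃ :
      weight g (3 * (j + 1)) = (6 * j + 7) / (6 * g - 7 - 6 * j) * weight g (3 * j + 2) := by
    rw [show 3 * (j + 1) = 3 * j + 2 + 1 by ring, weight_succ (by omega)]; push_cast; ring_nf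
  have hw := weight_pos g (3 * j + 1)
  have hc : (0 : ℚ) < (g - 1).choose j := by exact_mod_cast Nat.choose_pos (by omega)
  rw [show 3 * j + 3 = 3 * (j + 1) by ring, incr_three_mul (by omega),
    incr_three_mul_add_one (by omega), neg_neg, hchoose, hw₃, hw₂]
  calc _ = 2 * (g - 1).choose j * weight g (3 * j + 1) * ((g - 1 - j) / (j + 1) *
        ((6 * j + 7) / (6 * g - 7 - 6 * j) * ((6 * j + 5) / (6 * g - 5 - 6 * j)))) := by ring
    _ < 2 * (g - 1).choose j * weight g (3 * j + 1) * 1 :=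
        mul_lt_mul_of_pos_left hratio (by positivity)
    _ = _ := mul_one _

namespace IsCorr

variable {g : ℕ} {a : ℕ → ℚ}

theorem apply_succ (ha : IsCorr g a) {k : ℕ} (hk : k + 1 ≤ (3 * g - 1) / 2) :
    a (k + 1) = a k + incr g k := by
  rw [incr, ← ha.2.1 k hk]; ring

theorem apply_one (ha : IsCorr g a) (hg : 1 ≤ g) : a 1 = 1 - 2 / (6 * (g : ℚ) - 1) := by
  have h := incr_three_mul (g := g) (j := 0) (by omega)
  rw [Nat.mul_zero, Nat.choose_zero_right, weight_zero hg] at h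
  rw [ha.apply_succ (k := 0) (by omega), ha.1, h]
  ring

theorem lt_apply_zero (ha : IsCorr g a) :
    ∀ k, 0 < k → k ≤ (3 * g - 1) / 2 → a k < a 0 := by
  refine lt_apply_zero_of_lt_apply_mul (p := 3) (by norm_num) fun j r hr hr3 hjr => ?_
  have h₁ : a (3 * j + 1) = a (3 * j) + incr g (3 * j) := ha.apply_succ (by omega)
  have hT := incr_three_mul_neg (g := g) (j := j) (by omega)
  interval_cases r
  · linarith
  · have h₂ : a (3 * j + 2) = a (3 * j + 1) + incr g (3 * j + 1) := ha.apply_succ (by omega)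
    have := incr_three_mul_add_one_add_incr_lt_neg (g := g) (j := j) (by omega)
    have := incr_three_mul_add_two_nonneg (g := g) (j := j) (by omega)
    linarith
  · have h₂ : a (3 * j + 2) = a (3 * j + 1) + incr g (3 * j + 1) := ha.apply_succ (by omega)
    have h₃ : a (3 * j + 3) = a (3 * j + 2) + incr g (3 * j + 2) := ha.apply_succ (by omega)
    have := incr_three_mul_add_one_add_incr_lt_neg (g := g) (j := j) (by omega)
    linarith

theorem apply_one_lt (ha : IsCorr g a) :
    ∀ k, 1 < k → k ≤ (3 * g - 1) / 2 → a 1 < a k := by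
  -- the blocks of `k ↦ -a (k + 1)` start at the indices `3j + 1` of `a`
  have key := lt_apply_zero_of_lt_apply_mul (b := fun k => -a (k + 1)) (p := 3)
    (N := (3 * g - 1) / 2 - 1) (by norm_num) fun j r hr hr3 hjr => by
    have h₂ : a (3 * j + 2) = a (3 * j + 1) + incr g (3 * j + 1) := ha.apply_succ (by omega)
    have hP := incr_three_mul_add_one_pos (g := g) (j := j) (by omega)
    interval_cases r
    · simp only [neg_lt_neg_iff]; linarith
    · have h₃ : a (3 * j + 3) = a (3 * j + 2) + incr g (3 * j + 2) := ha.apply_succ (by omega)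
      have := incr_three_mul_add_two_nonneg (g := g) (j := j) (by omega)
      simp only [neg_lt_neg_iff]; linarith
    · have h₃ : a (3 * j + 3) = a (3 * j + 2) + incr g (3 * j + 2) := ha.apply_succ (by omega)
      have h₄ : a (3 * j + 4) = a (3 * j + 3) + incr g (3 * j + 3) := ha.apply_succ (by omega)
      have := incr_three_mul_add_two_nonneg (g := g) (j := j) (by omega)
      have := neg_incr_three_mul_add_three_lt (g := g) (j := j) (by omega)
      simp only [neg_lt_neg_iff]; linarith
  intro k hk hkM
  simpa [Nat.sub_add_cancel (by omega : 1 ≤ k)] using key (k - 1) (by omega) (by omega)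

end IsCorr

/-- For every integer `g ≥ 1`, the normalized 2-correlators
satisfy `a_{g,0} = a_{g,3g-1} = 1`, `a_{g,1} = a_{g,3g-2} = 1 - 2/(6g-1)`, and
`1 - 2/(6g-1) < a_{g,k} < 1` for all `2 ≤ k ≤ 3g-3`. -/
theorem stmt0 (g : ℕ) (hg : 1 ≤ g) (a : ℕ → ℚ) (ha : IsCorr g a) :
    a 0 = 1 ∧ a (3 * g - 1) = 1 ∧
    a 1 = 1 - 2 / (6 * (g : ℚ) - 1) ∧ a (3 * g - 2) = 1 - 2 / (6 * (g : ℚ) - 1) ∧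
    ∀ k : ℕ, 2 ≤ k → k ≤ 3 * g - 3 →
      1 - 2 / (6 * (g : ℚ) - 1) < a k ∧ a k < 1 := by
  have hsymm : ∀ k ≤ 3 * g - 1, a (3 * g - 1 - k) = a k := fun k hk => (ha.2.2 k hk).symm
  refine ⟨ha.1, ?_, ha.apply_one hg, ?_, fun k hk₂ hk => ?_⟩
  · simpa [ha.1] using hsymm 0 (by omega)
  · rw [show 3 * g - 2 = 3 * g - 1 - 1 by omega, hsymm 1 (by omega), ha.apply_one hg]
  · rw [← ha.apply_one hg, ← ha.1]
    wlog hkM : k ≤ (3 * g - 1) / 2 generalizing k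
    · rw [← hsymm k (by omega)]
      exact this _ (by omega) (by omega) (by omega)
    exact ⟨ha.apply_one_lt k hk₂ hkM, ha.lt_apply_zero k (by omega) hkM⟩
end

section
/- For every integer g ≥ 1, ζ(6g) · C(4g,g) · (16/3)^g · (1 − 2/(6g−1)) ≤ V1(g+1) ≤ ζ(6g) · C(4g,g) · (16/3)^g. -/
open Nat Real Filter


/-!
Write `Δ k = a (k+1) - a k` for the steps of the recurrence and group them in blocks of three.
Then `Δ (3j) < 0 < Δ (3j+1)` and `Δ (3j+2) ≥ 0`; after pulling out a common positive factor and
writing `g = 2j + 3 + m`, the blocks `Δ (3j) + Δ (3j+1) + Δ (3j+2)` and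
`Δ (3j+1) + Δ (3j+2) + Δ (3j+3)` are, up to sign, polynomials in `j` and `m` with nonnegative
coefficients, so the first is `≤ 0` and the second `≥ 0`. Hence on the first half
`k ≤ ⌊(3g-1)/2⌋` the sequence stays between `a 1 = 1 - 2/(6g-1)` and `a 0 = 1`, and by the
symmetry everywhere. Finally `V1 (g+1)` is `ζ(6g) C(4g,g) (16/3)^g` times the mean of the `a_{g,k}`
with weights `C(6g,2k+1) / 2^(6g-1)`, which sum to `1` because the odd binomial coefficients of
`6g` add up to `2^(6g-1)`.
-/

noncomputable def corrStep (g k : ℕ) : ℚ :=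
  ((6 * g - 3 - 2 * k)‼ : ℚ) / ((6 * g - 1)‼ : ℚ) * Dterm g k

noncomputable def corrStepScale (g j : ℕ) : ℚ :=
  (6 * j + 1)‼ * (g - 1)! / ((j + 1)! * (g - 1 - j)! * (6 * g - 1)‼)

lemma corrStepScale_pos (g j : ℕ) : 0 < corrStepScale g j := by
  unfold corrStepScale
  positivity

lemma corrStep_three_mul (g j : ℕ) :
    corrStep g (3 * j) = -(2 * (j + 1) * corrStepScale g j * (6 * g - 3 - 6 * j)‼) := by
  rw [corrStep, Dterm, if_neg (by omega), if_pos (by omega),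
    Nat.mul_div_cancel_left _ (by norm_num),
    show 6 * g - 3 - 2 * (3 * j) = 6 * g - 3 - 6 * j by omega, corrStepScale, Nat.factorial_succ]
  push_cast
  field_simp

lemma corrStep_three_mul_add_one (g j : ℕ) :
    corrStep g (3 * j + 1) =
      2 * (j + 1) * (6 * j + 3) * corrStepScale g j * (6 * g - 5 - 6 * j)‼ := by
  rw [corrStep, Dterm, if_neg (by omega), if_neg (by omega),
    show (3 * j + 1 - 1) / 3 = j by omega,
    show 6 * g - 3 - 2 * (3 * j + 1) = 6 * g - 5 - 6 * j by omega,
    show 6 * j + 3 = 6 * j + 1 + 2 by omega, Nat.doubleFactorial_add_two, corrStepScale,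
    Nat.factorial_succ]
  push_cast
  field_simp
  ring

lemma corrStep_three_mul_add_two (g j : ℕ) :
    corrStep g (3 * j + 2) =
      (6 * j + 3) * (6 * j + 5) * ((g : ℚ) - 2 * j - 2) * corrStepScale g j *
        (6 * g - 7 - 6 * j)‼ := by
  rw [corrStep, Dterm, if_pos (by omega), show (3 * j + 2 + 1) / 3 = j + 1 by omega,
    show 6 * g - 3 - 2 * (3 * j + 2) = 6 * g - 7 - 6 * j by omega,
    show 6 * (j + 1) - 1 = 6 * j + 1 + 2 + 2 by omega, Nat.doubleFactorial_add_two,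
    Nat.doubleFactorial_add_two, show g - (j + 1) = g - 1 - j by omega, corrStepScale]
  push_cast
  field_simp
  ring

lemma corrStep_three_mul_add_three {g j : ℕ} (h : j + 2 ≤ g) :
    corrStep g (3 * j + 3) = -(2 * (6 * j + 3) * (6 * j + 5) * (6 * j + 7) * ((g : ℚ) - 1 - j) *
      corrStepScale g j * (6 * g - 9 - 6 * j)‼) := by
  have hfac : (g - 1 - j)! = (g - 1 - j) * (g - 1 - (j + 1))! := by
    rw [show g - 1 - j = g - 1 - (j + 1) + 1 by omega, Nat.factorial_succ]
  have hcast : ((g - 1 - j : ℕ) : ℚ) = g - 1 - j := by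
    rw [Nat.cast_sub (by omega), Nat.cast_sub (by omega)]; push_cast; ring
  rw [corrStep, Dterm, if_neg (by omega), if_pos (by omega), show (3 * j + 3) / 3 = j + 1 by omega,
    show 6 * g - 3 - 2 * (3 * j + 3) = 6 * g - 9 - 6 * j by omega,
    show 6 * (j + 1) + 1 = 6 * j + 1 + 2 + 2 + 2 by omega, Nat.doubleFactorial_add_two,
    Nat.doubleFactorial_add_two, Nat.doubleFactorial_add_two, corrStepScale, hfac]
  push_cast
  rw [hcast]
  have : (g : ℚ) - 1 - j ≠ 0 := by
    rw [← hcast]; exact_mod_cast (show g - 1 - j ≠ 0 by omega)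
  field_simp
  ring

lemma corrStep_zero {g : ℕ} (hg : 1 ≤ g) : corrStep g 0 = -2 / (6 * g - 1) := by
  have hcast : ((6 * g - 3 : ℕ) : ℚ) + 2 = 6 * g - 1 := by
    rw [Nat.cast_sub (by omega)]; push_cast; ring
  have h := corrStep_three_mul g 0
  rw [mul_zero] at h
  rw [h, corrStepScale, show 6 * g - 1 = 6 * g - 3 + 2 by omega, Nat.doubleFactorial_add_two]
  simp only [mul_zero, Nat.cast_zero, zero_add, Nat.sub_zero, Nat.factorial_one,
    show (1 : ℕ)‼ = 1 from rfl]
  push_cast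
  rw [hcast]
  have : (6 * g - 1 : ℚ) ≠ 0 := by rw [← hcast]; positivity
  field_simp

lemma corrStep_three_mul_neg (g j : ℕ) : corrStep g (3 * j) < 0 := by
  rw [corrStep_three_mul, neg_neg_iff_pos]
  have := corrStepScale_pos g j
  positivity

lemma corrStep_three_mul_add_one_pos (g j : ℕ) : 0 < corrStep g (3 * j + 1) := by
  rw [corrStep_three_mul_add_one]
  have := corrStepScale_pos g j
  positivity

lemma corrStep_three_mul_add_two_nonneg {g j : ℕ} (h : 2 * j + 2 ≤ g) :
    0 ≤ corrStep g (3 * j + 2) := by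
  obtain ⟨m, rfl⟩ := Nat.exists_eq_add_of_le h
  rw [corrStep_three_mul_add_two,
    show ((2 * j + 2 + m : ℕ) : ℚ) - 2 * j - 2 = m by push_cast; ring]
  have := corrStepScale_pos (2 * j + 2 + m) j
  positivity

lemma corrStep_pair_nonpos {g j : ℕ} (h : 2 * j + 1 ≤ g) :
    corrStep g (3 * j) + corrStep g (3 * j + 1) ≤ 0 := by
  obtain ⟨m, rfl⟩ := Nat.exists_eq_add_of_le h
  have hc := corrStepScale_pos (2 * j + 1 + m) j
  rw [corrStep_three_mul, corrStep_three_mul_add_one,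
    show 6 * (2 * j + 1 + m) - 3 - 6 * j = 6 * j + 6 * m + 1 + 2 by omega,
    show 6 * (2 * j + 1 + m) - 5 - 6 * j = 6 * j + 6 * m + 1 by omega,
    Nat.doubleFactorial_add_two (6 * j + 6 * m + 1)]
  have hP : 0 ≤ corrStepScale (2 * j + 1 + m) j * ((6 * j + 6 * m + 1)‼ : ℚ) *
      (12 * m * (j + 1)) := by positivity
  push_cast
  linear_combination hP

lemma corrStep_block_nonpos {g j : ℕ} (h : 2 * j + 3 ≤ g) :
    corrStep g (3 * j) + corrStep g (3 * j + 1) + corrStep g (3 * j + 2) ≤ 0 := by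
  obtain ⟨m, rfl⟩ := Nat.exists_eq_add_of_le h
  have hc := corrStepScale_pos (2 * j + 3 + m) j
  rw [corrStep_three_mul, corrStep_three_mul_add_one, corrStep_three_mul_add_two,
    show 6 * (2 * j + 3 + m) - 3 - 6 * j = 6 * j + 6 * m + 11 + 2 + 2 by omega,
    show 6 * (2 * j + 3 + m) - 5 - 6 * j = 6 * j + 6 * m + 11 + 2 by omega,
    show 6 * (2 * j + 3 + m) - 7 - 6 * j = 6 * j + 6 * m + 11 by omega,
    Nat.doubleFactorial_add_two (6 * j + 6 * m + 11 + 2),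
    Nat.doubleFactorial_add_two (6 * j + 6 * m + 11)]
  have hP : 0 ≤ corrStepScale (2 * j + 3 + m) j * ((6 * j + 6 * m + 11)‼ : ℚ) *
      (108 * j ^ 2 + 408 * j + 297 + 36 * m * j ^ 2 + 324 * m * j + 285 * m + 72 * m ^ 2 * j +
        72 * m ^ 2) := by positivity
  push_cast
  linear_combination hP

lemma corrStep_shifted_block_nonneg {g j : ℕ} (h : 2 * j + 3 ≤ g) :
    0 ≤ corrStep g (3 * j + 1) + corrStep g (3 * j + 2) + corrStep g (3 * j + 3) := by
  obtain ⟨m, rfl⟩ := Nat.exists_eq_add_of_le h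
  have hc := corrStepScale_pos (2 * j + 3 + m) j
  rw [corrStep_three_mul_add_one, corrStep_three_mul_add_two,
    corrStep_three_mul_add_three (by omega),
    show 6 * (2 * j + 3 + m) - 5 - 6 * j = 6 * j + 6 * m + 9 + 2 + 2 by omega,
    show 6 * (2 * j + 3 + m) - 7 - 6 * j = 6 * j + 6 * m + 9 + 2 by omega,
    show 6 * (2 * j + 3 + m) - 9 - 6 * j = 6 * j + 6 * m + 9 by omega,
    Nat.doubleFactorial_add_two (6 * j + 6 * m + 9 + 2),
    Nat.doubleFactorial_add_two (6 * j + 6 * m + 9)]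
  have hQ : 0 ≤ (6 * j + 3) * corrStepScale (2 * j + 3 + m) j * ((6 * j + 6 * m + 9)‼ : ℚ) *
      (108 * j ^ 2 + 108 * m * j ^ 2 + 312 * j + 420 * m * j + 108 * m ^ 2 * j + 201 + 303 * m +
        102 * m ^ 2) := by positivity
  push_cast
  linear_combination hQ

section Sequence

variable {g : ℕ} {a : ℕ → ℚ}
  (hrec : ∀ k, k + 1 ≤ (3 * g - 1) / 2 → a (k + 1) - a k = corrStep g k)
include hrec

lemma apply_three_mul_add_le {j r : ℕ} (hr : r < 3) (h : 3 * j + r ≤ (3 * g - 1) / 2) :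
    a (3 * j + r) ≤ a (3 * j) := by
  interval_cases r
  · rfl
  · linarith [hrec (3 * j) (by omega), corrStep_three_mul_neg g j]
  · linarith [hrec (3 * j) (by omega), hrec (3 * j + 1) (by omega),
      corrStep_pair_nonpos (g := g) (j := j) (by omega)]

lemma apply_three_mul_le_apply_zero (j : ℕ) (h : 3 * j ≤ (3 * g - 1) / 2) :
    a (3 * j) ≤ a 0 := by
  induction j with
  | zero => rfl
  | succ j ih =>
    rw [show 3 * (j + 1) = 3 * j + 2 + 1 by ring] at h ⊢
    linarith [ih (by omega), hrec (3 * j) (by omega), hrec (3 * j + 1) (by omega),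
      hrec (3 * j + 2) h, corrStep_block_nonpos (g := g) (j := j) (by omega)]

lemma apply_le_apply_zero {n : ℕ} (h : n ≤ (3 * g - 1) / 2) : a n ≤ a 0 := by
  rw [← Nat.div_add_mod n 3] at h ⊢
  exact (apply_three_mul_add_le hrec (Nat.mod_lt n (by norm_num)) h).trans
    (apply_three_mul_le_apply_zero hrec _ (by omega))

lemma apply_three_mul_add_one_le {j r : ℕ} (hr : r < 3) (h : 3 * j + 1 + r ≤ (3 * g - 1) / 2) :
    a (3 * j + 1) ≤ a (3 * j + 1 + r) := by
  interval_cases r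
  · rfl
  · linarith [hrec (3 * j + 1) (by omega), corrStep_three_mul_add_one_pos g j]
  · linarith [hrec (3 * j + 1) (by omega), hrec (3 * j + 2) (by omega),
      corrStep_three_mul_add_one_pos g j,
      corrStep_three_mul_add_two_nonneg (g := g) (j := j) (by omega)]

lemma apply_one_le_apply_three_mul_add_one (j : ℕ) (h : 3 * j + 1 ≤ (3 * g - 1) / 2) :
    a 1 ≤ a (3 * j + 1) := by
  induction j with
  | zero => rfl
  | succ j ih =>
    rw [show 3 * (j + 1) + 1 = 3 * j + 3 + 1 by ring] at h ⊢
    linarith [ih (by omega), hrec (3 * j + 1) (by omega), hrec (3 * j + 2) (by omega),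
      hrec (3 * j + 3) h, corrStep_shifted_block_nonneg (g := g) (j := j) (by omega)]

lemma apply_one_le_apply {n : ℕ} (h₁ : 1 ≤ n) (h : n ≤ (3 * g - 1) / 2) : a 1 ≤ a n := by
  have hn : n = 3 * ((n - 1) / 3) + 1 + (n - 1) % 3 := by omega
  rw [hn] at h ⊢
  exact (apply_one_le_apply_three_mul_add_one hrec _ (by omega)).trans
    (apply_three_mul_add_one_le hrec (Nat.mod_lt _ (by norm_num)) h)

end Sequence

lemma IsCorr.mem_Icc {g : ℕ} {a : ℕ → ℚ} (ha : IsCorr g a) (hg : 1 ≤ g) {k : ℕ}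
    (hk : k ≤ 3 * g - 1) : a k ∈ Set.Icc (1 - 2 / (6 * g - 1) : ℚ) 1 := by
  obtain ⟨ha0, hrec, hsymm⟩ := ha
  have ha1 : a 1 = 1 - 2 / (6 * g - 1) := by
    have h0 : a 1 - a 0 = corrStep g 0 := hrec 0 (by omega)
    rw [corrStep_zero hg, ha0] at h0
    linear_combination h0
  have hhalf : ∀ n ≤ (3 * g - 1) / 2, a n ∈ Set.Icc (a 1) (a 0) := by
    intro n hn
    refine ⟨?_, apply_le_apply_zero hrec hn⟩
    rcases Nat.eq_zero_or_pos n with rfl | hpos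
    · exact apply_le_apply_zero hrec (by omega)
    · exact apply_one_le_apply hrec hpos hn
  rw [← ha1, ← ha0]
  rcases le_or_gt k ((3 * g - 1) / 2) with hk' | hk'
  · exact hhalf k hk'
  · exact hsymm k hk ▸ hhalf _ (by omega)

lemma sum_range_two_mul {M : Type*} [AddCommMonoid M] (f : ℕ → M) (n : ℕ) :
    ∑ i ∈ Finset.range (2 * n), f i =
      ∑ k ∈ Finset.range n, (f (2 * k) + f (2 * k + 1)) := by
  induction n with
  | zero => simp
  | succ n ih =>
    rw [show 2 * (n + 1) = 2 * n + 1 + 1 by ring, Finset.sum_range_succ, Finset.sum_range_succ, ih,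
      Finset.sum_range_succ, add_assoc]

lemma sum_range_choose_odd (n : ℕ) :
    ∑ k ∈ Finset.range (n + 1), (2 * n + 2).choose (2 * k + 1) = 2 ^ (2 * n + 1) := by
  rw [← Nat.sum_range_choose, show 2 * n + 1 + 1 = 2 * (n + 1) by ring, sum_range_two_mul]
  exact Finset.sum_congr rfl fun k _ => Nat.choose_succ_succ' _ _

lemma zetaR_nonneg (s : ℕ) : 0 ≤ zetaR s :=
  tsum_nonneg fun _ => by positivity

lemma V1_succ (a : ℕ → ℕ → ℚ) {g : ℕ} (hg : 1 ≤ g) :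
    V1 a (g + 1) = zetaR (6 * g) * ((4 * g).choose g : ℝ) * (16 / 3) ^ g *
      ∑ k ∈ Finset.range (3 * g),
        ((6 * g).choose (2 * k + 1) / 2 ^ (6 * g - 1) : ℝ) * a g k := by
  have hconst : (2 / (3 ^ g * 2 ^ (2 * g)) : ℝ) = (16 / 3) ^ g / 2 ^ (6 * g - 1) := by
    obtain ⟨m, hm⟩ : ∃ m, 6 * g = m + 1 := ⟨6 * g - 1, by omega⟩
    have h16 : (16 : ℝ) ^ g * 2 ^ (2 * g) = 2 ^ (m + 1) := by
      rw [← hm, show (16 : ℝ) = 2 ^ 4 by norm_num, ← pow_mul, ← pow_add]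
      ring_nf
    rw [div_pow, div_div, div_eq_div_iff (by positivity) (by positivity),
      show 6 * g - 1 = m by omega]
    linear_combination (-(3 : ℝ) ^ g) * h16
  simp only [V1, show 6 * (g + 1) - 6 = 6 * g by omega, show 4 * (g + 1) - 4 = 4 * g by omega,
    show g + 1 - 1 = g by omega, show 3 * (g + 1) - 3 = 3 * g by omega,
    show 2 * (g + 1) - 2 = 2 * g by omega, hconst, Finset.mul_sum]
  refine Finset.sum_congr rfl fun k _ => ?_
  ring

lemma sum_range_choose_odd_div (g : ℕ) (hg : 1 ≤ g) :
    ∑ k ∈ Finset.range (3 * g), ((6 * g).choose (2 * k + 1) / 2 ^ (6 * g - 1) : ℝ) = 1 := by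
  obtain ⟨n, hn⟩ : ∃ n, 3 * g = n + 1 := ⟨3 * g - 1, by omega⟩
  rw [← Finset.sum_div, div_eq_one_iff_eq (by positivity), show 6 * g = 2 * n + 2 by omega, hn,
    show 2 * n + 2 - 1 = 2 * n + 1 by omega]
  exact_mod_cast sum_range_choose_odd n

/-- two-sided bounds for `V1(g+1)`. -/
theorem stmt7 (a : ℕ → ℕ → ℚ) (ha : ∀ g : ℕ, 1 ≤ g → IsCorr g (a g))
    (g : ℕ) (hg : 1 ≤ g) :
    zetaR (6 * g) * ((4 * g).choose g : ℝ) * (16 / 3) ^ g * (1 - 2 / (6 * (g : ℝ) - 1))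
        ≤ V1 a (g + 1) ∧
      V1 a (g + 1) ≤ zetaR (6 * g) * ((4 * g).choose g : ℝ) * (16 / 3) ^ g := by
  have hmean : ∑ k ∈ Finset.range (3 * g),
      ((6 * g).choose (2 * k + 1) / 2 ^ (6 * g - 1) : ℝ) * a g k ∈
        Set.Icc (1 - 2 / (6 * (g : ℝ) - 1)) 1 := by
    refine (convex_Icc _ _).sum_mem (fun k _ => by positivity) (sum_range_choose_odd_div g hg)
      fun k hk => ?_
    obtain ⟨hlo, hhi⟩ := (ha g hg).mem_Icc hg (k := k) (by rw [Finset.mem_range] at hk; omega)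
    exact ⟨by exact_mod_cast hlo, by exact_mod_cast hhi⟩
  have hfactor : 0 ≤ zetaR (6 * g) * ((4 * g).choose g : ℝ) * (16 / 3) ^ g := by
    have := zetaR_nonneg (6 * g)
    positivity
  rw [V1_succ a hg]
  exact ⟨mul_le_mul_of_nonneg_left hmean.1 hfactor, mul_le_of_le_one_right hfactor hmean.2⟩
end

section
/- Let g ≥ 1 be an integer and set Q(g,j) = g(6g−6j−1)(6g−6j−3), P₁(g,j) = (6g−6j−1)(6g−6j−3)(g−2j), P₂(g,j) = −2(6g−6j−3)(6j+1)(g−j), and P₃(g,j) = 2(6j+1)(6j+3)(g−j). Then: (i) 0 < P₁(g,j)/Q(g,j) < 1 for every integer j with 3 ≤ 3j ≤ ⌊(3g−1)/2⌋; (ii) −1 < P₂(g,j)/Q(g,j) < 0 for every integer j ≥ 0 with 3j+1 ≤ ⌊(3g−1)/2⌋; (iii) 0 < P₃(g,j)/Q(g,j) < 1 for every integer j ≥ 0 with 3j+2 ≤ ⌊(3g−1)/2⌋. -/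
open Nat Real Filter

/-- `Q(g,j) = g(6g-6j-1)(6g-6j-3)`. -/
def Qq (g j : ℕ) : ℚ := (g : ℚ) * (6 * g - 6 * j - 1) * (6 * g - 6 * j - 3)

/-- `P₁(g,j) = (6g-6j-1)(6g-6j-3)(g-2j)`. -/
def Pone (g j : ℕ) : ℚ := (6 * (g : ℚ) - 6 * j - 1) * (6 * g - 6 * j - 3) * ((g : ℚ) - 2 * j)

/-- `P₂(g,j) = -2(6g-6j-3)(6j+1)(g-j)`. -/
def Ptwo (g j : ℕ) : ℚ := -2 * (6 * (g : ℚ) - 6 * j - 3) * (6 * (j : ℚ) + 1) * ((g : ℚ) - j)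

/-- `P₃(g,j) = 2(6j+1)(6j+3)(g-j)`. -/
def Pthree (g j : ℕ) : ℚ := 2 * (6 * (j : ℚ) + 1) * (6 * (j : ℚ) + 3) * ((g : ℚ) - j)


/-- bounds on the ratios `P_i(g,j)/Q(g,j)` on the relevant
ranges of `j`. -/
theorem stmt10 (g : ℕ) (hg : 1 ≤ g) :
    (∀ j : ℕ, 3 ≤ 3 * j → 3 * j ≤ (3 * g - 1) / 2 →
      0 < Pone g j / Qq g j ∧ Pone g j / Qq g j < 1) ∧
    (∀ j : ℕ, 3 * j + 1 ≤ (3 * g - 1) / 2 →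
      -1 < Ptwo g j / Qq g j ∧ Ptwo g j / Qq g j < 0) ∧
    (∀ j : ℕ, 3 * j + 2 ≤ (3 * g - 1) / 2 →
      0 < Pthree g j / Qq g j ∧ Pthree g j / Qq g j < 1) := by
  have hgq : (1:ℚ) ≤ g := by exact_mod_cast hg
  refine ⟨?_, ?_, ?_⟩
  · intro j h1 h2
    have h6 : 6 * j + 1 ≤ 3 * g := by
      have := (Nat.le_div_iff_mul_le (by norm_num : 0 < 2)).mp h2
      omega
    have hjq : (1:ℚ) ≤ j := by exact_mod_cast (by omega : 1 ≤ j)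
    have hq : 6 * (j:ℚ) + 1 ≤ 3 * g := by exact_mod_cast h6
    have hA1 : (0:ℚ) < 6 * g - 6 * j - 1 := by linarith
    have hA3 : (0:ℚ) < 6 * g - 6 * j - 3 := by linarith
    have hx2y : (0:ℚ) < (g:ℚ) - 2 * j := by linarith
    have hx : (0:ℚ) < g := by linarith
    have hQ : 0 < Qq g j := by
      have := mul_pos (mul_pos hx hA1) hA3
      unfold Qq; linarith
    have hP : 0 < Pone g j := by
      have := mul_pos (mul_pos hA1 hA3) hx2y
      unfold Pone; linarith
    refine ⟨div_pos hP hQ, ?_⟩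
    rw [div_lt_one hQ]
    have key : 0 < 2 * (j:ℚ) * ((6 * g - 6 * j - 1) * (6 * g - 6 * j - 3)) :=
      mul_pos (by linarith) (mul_pos hA1 hA3)
    unfold Pone Qq; nlinarith [key]
  · intro j h2
    have h6 : 6 * j + 3 ≤ 3 * g := by
      have := (Nat.le_div_iff_mul_le (by norm_num : 0 < 2)).mp h2
      omega
    have hy : (0:ℚ) ≤ j := by positivity
    have hq : 6 * (j:ℚ) + 3 ≤ 3 * g := by exact_mod_cast h6
    have hA1 : (0:ℚ) < 6 * g - 6 * j - 1 := by linarith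
    have hA3 : (0:ℚ) < 6 * g - 6 * j - 3 := by linarith
    have hB : (0:ℚ) < 6 * j + 1 := by linarith
    have hxy : (0:ℚ) < (g:ℚ) - j := by linarith
    have hx : (0:ℚ) < g := by linarith
    have hQ : 0 < Qq g j := by
      have := mul_pos (mul_pos hx hA1) hA3
      unfold Qq; linarith
    have hP : Ptwo g j < 0 := by
      have := mul_pos (mul_pos hA3 hB) hxy
      unfold Ptwo; nlinarith [this]
    refine ⟨?_, div_neg_of_neg_of_pos hP hQ⟩
    rw [neg_lt, ← neg_div, div_lt_one hQ]
    have hu : (0:ℚ) ≤ (g:ℚ) - 2 * j - 1 := by linarith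
    unfold Ptwo Qq
    nlinarith [hu, hy, mul_nonneg hu hu, mul_nonneg hu hy, mul_nonneg hy hy,
      mul_nonneg (mul_nonneg hu hu) hu, mul_nonneg (mul_nonneg hu hu) hy,
      mul_nonneg (mul_nonneg hu hy) hy]
  · intro j h2
    have h6 : 6 * j + 5 ≤ 3 * g := by
      have := (Nat.le_div_iff_mul_le (by norm_num : 0 < 2)).mp h2
      omega
    have hy : (0:ℚ) ≤ j := by positivity
    have hq : 6 * (j:ℚ) + 5 ≤ 3 * g := by exact_mod_cast h6
    have hA1 : (0:ℚ) < 6 * g - 6 * j - 1 := by linarith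
    have hA3 : (0:ℚ) < 6 * g - 6 * j - 3 := by linarith
    have hB1 : (0:ℚ) < 6 * j + 1 := by linarith
    have hB3 : (0:ℚ) < 6 * j + 3 := by linarith
    have hxy : (0:ℚ) < (g:ℚ) - j := by linarith
    have hx : (0:ℚ) < g := by linarith
    have hQ : 0 < Qq g j := by
      have := mul_pos (mul_pos hx hA1) hA3
      unfold Qq; linarith
    have hP : 0 < Pthree g j := by
      have := mul_pos (mul_pos hB1 hB3) hxy
      unfold Pthree; nlinarith [this]
    refine ⟨div_pos hP hQ, ?_⟩
    rw [div_lt_one hQ]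
    have hu : (0:ℚ) ≤ 3 * (g:ℚ) - 6 * j - 5 := by linarith
    unfold Pthree Qq
    nlinarith [hu, hy, mul_nonneg hu hu, mul_nonneg hu hy, mul_nonneg hy hy,
      mul_nonneg (mul_nonneg hu hu) hu, mul_nonneg (mul_nonneg hu hu) hy,
      mul_nonneg (mul_nonneg hu hy) hy]
end

section
/- For every integer g ≥ 1 the function j ↦ R(g,j) is strictly decreasing on {0,1,…,⌊(g−1)/2⌋}; that is, R(g,j+1) < R(g,j) for every integer j with 0 ≤ j ≤ ⌊(g−1)/2⌋ − 1. -/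
/-! With `x = g - j`, the identity `C(n, k+m)·(k+m)_m = C(n, k)·(n-k)_m` for falling factorials `(a)_m`
turns `R(g,j+1)/R(g,j)` into a quotient of falling factorials which, after cancelling the even factors, is
`3x(2j+1)(6j+1)(6j+5) / ((j+1)(6x-1)(6x-5)(6x-3))`. For `j ≤ ⌊(g-1)/2⌋ - 1` we have `x ≥ j + 3`,
and then each of `3x(2j+1) / ((j+1)(6x-1))`, `(6j+1)/(6x-5)` and `(6j+5)/(6x-3)` is below `1`. -/

open Nat Real Filter

theorem Nat.choose_add_mul_descFactorial (n k m : ℕ) :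
    n.choose (k + m) * (k + m).descFactorial m = n.choose k * (n - k).descFactorial m := by
  apply Nat.eq_of_mul_eq_mul_right k.factorial_pos
  have hk : (k + m - m)! * (k + m).descFactorial m = (k + m)! :=
    factorial_mul_descFactorial (Nat.le_add_left m k)
  have hn := descFactorial_mul_descFactorial (n := n) (Nat.le_add_right k m)
  rw [Nat.add_sub_cancel, Nat.add_sub_cancel_left] at *
  calc n.choose (k + m) * (k + m).descFactorial m * k !
      = n.descFactorial (k + m) := by
        rw [descFactorial_eq_factorial_mul_choose n (k + m), ← hk]; ring
    _ = n.choose k * (n - k).descFactorial m * k ! := by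
        rw [← hn, descFactorial_eq_factorial_mul_choose n k]; ring

theorem descFactorial_cross_lt (t x : ℕ) (h : t + 3 ≤ x) :
    (3 * x).descFactorial 3 * x * (6 * t + 6).descFactorial 6 <
      (6 * x).descFactorial 6 * (3 * t + 3).descFactorial 3 * (t + 1) := by
  obtain ⟨d, rfl⟩ := Nat.exists_eq_add_of_le h
  have h₁ : 3 * (t + 3 + d) * (2 * t + 1) < (t + 1) * (6 * t + 6 * d + 17) := by nlinarith
  have h₂ : 6 * t + 1 < 6 * t + 6 * d + 13 := by omega
  have h₃ : 6 * t + 5 < 6 * t + 6 * d + 15 := by omega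
  have hC : 0 < 72 * (t + 3 + d) * (3 * t + 3 * d + 8) * (3 * t + 3 * d + 7) *
      ((3 * t + 1) * (3 * t + 2) * (t + 1)) := by positivity
  rw [show 3 * (t + 3 + d) = 3 * t + 3 * d + 6 + 3 by ring,
    show 6 * (t + 3 + d) = 6 * t + 6 * d + 12 + 6 by ring]
  simp only [succ_descFactorial_succ, descFactorial_zero]
  calc _ = 72 * (t + 3 + d) * (3 * t + 3 * d + 8) * (3 * t + 3 * d + 7) *
        ((3 * t + 1) * (3 * t + 2) * (t + 1)) *
        (3 * (t + 3 + d) * (2 * t + 1) * (6 * t + 1) * (6 * t + 5)) := by ring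
    _ < 72 * (t + 3 + d) * (3 * t + 3 * d + 8) * (3 * t + 3 * d + 7) *
        ((3 * t + 1) * (3 * t + 2) * (t + 1)) *
        ((t + 1) * (6 * t + 6 * d + 17) * (6 * t + 6 * d + 13) * (6 * t + 6 * d + 15)) :=
      Nat.mul_lt_mul_of_pos_left (Nat.mul_lt_mul'' (Nat.mul_lt_mul'' h₁ h₂) h₃) hC
    _ = _ := by ring

theorem choose_cross_lt (g j : ℕ) (h : j + 3 ≤ g - j) :
    (3 * g).choose (3 * j + 3) * g.choose (j + 1) * (6 * g).choose (6 * j) <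
      (3 * g).choose (3 * j) * g.choose j * (6 * g).choose (6 * j + 6) := by
  have h₃ := Nat.choose_add_mul_descFactorial (3 * g) (3 * j) 3
  have h₁ := Nat.choose_add_mul_descFactorial g j 1
  have h₆ := Nat.choose_add_mul_descFactorial (6 * g) (6 * j) 6
  rw [show 3 * g - 3 * j = 3 * (g - j) by omega] at h₃
  rw [show 6 * g - 6 * j = 6 * (g - j) by omega] at h₆
  rw [descFactorial_one, descFactorial_one] at h₁
  have hpos : 0 < (3 * g).choose (3 * j) * g.choose j * (6 * g).choose (6 * j) := by
    have := choose_pos (show j ≤ g by omega)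
    have := choose_pos (show 3 * j ≤ 3 * g by omega)
    have := choose_pos (show 6 * j ≤ 6 * g by omega)
    positivity
  apply Nat.lt_of_mul_lt_mul_right (a := (3 * j + 3).descFactorial 3 * (j + 1) *
    (6 * j + 6).descFactorial 6)
  calc _ = (3 * g).choose (3 * j + 3) * (3 * j + 3).descFactorial 3 *
        (g.choose (j + 1) * (j + 1)) * (6 * g).choose (6 * j) * (6 * j + 6).descFactorial 6 := by
        ring
    _ = (3 * g).choose (3 * j) * g.choose j * (6 * g).choose (6 * j) *
        ((3 * (g - j)).descFactorial 3 * (g - j) * (6 * j + 6).descFactorial 6) := by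
        rw [h₃, h₁]; ring
    _ < (3 * g).choose (3 * j) * g.choose j * (6 * g).choose (6 * j) *
        ((6 * (g - j)).descFactorial 6 * (3 * j + 3).descFactorial 3 * (j + 1)) :=
      Nat.mul_lt_mul_of_pos_left (descFactorial_cross_lt j (g - j) h) hpos
    _ = (3 * g).choose (3 * j) * g.choose j * (3 * j + 3).descFactorial 3 * (j + 1) *
        ((6 * g).choose (6 * j + 6) * (6 * j + 6).descFactorial 6) := by
        rw [h₆]; ring
    _ = _ := by ring

theorem stmt11_general (g : ℕ) (j : ℕ) (hj : j + 1 ≤ (g - 1) / 2) :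
    R g (j + 1) < R g j := by
  have hpos : ∀ k ≤ g, (0 : ℚ) < ((6 * g).choose (6 * k) : ℚ) := fun k hk => by
    exact_mod_cast choose_pos (by omega)
  rw [R, R, div_lt_div_iff₀ (hpos _ (by omega)) (hpos _ (by omega)),
    show 3 * (j + 1) = 3 * j + 3 by ring, show 6 * (j + 1) = 6 * j + 6 by ring]
  exact_mod_cast choose_cross_lt g j (by omega)

/-- for fixed `g ≥ 1`, `j ↦ R(g,j)` is strictly decreasing on
`{0, 1, …, ⌊(g-1)/2⌋}`. -/
theorem stmt11 (g : ℕ) (hg : 1 ≤ g) (j : ℕ) (hj : j + 1 ≤ (g - 1) / 2) :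
    R g (j + 1) < R g j :=
  stmt11_general g j hj
end

section
/- For every integer g ≥ 1 and every integer k with 6 ≤ k ≤ ⌊(3g−1)/2⌋, the two-sided bound −R(g,2)·(g−3)/2 ≤ a_{g,k} − a_{g,5} ≤ R(g,2)·(3g−11)/3 holds. -/
open Nat Real Filter


lemma dfac_pos : ∀ n : ℕ, 0 < n‼
  | 0 => Nat.one_pos
  | 1 => Nat.one_pos
  | (n+2) => by rw [Nat.doubleFactorial_add_two]; exact Nat.mul_pos (by omega) (dfac_pos n)

lemma dfac6 (n : ℕ) : (n+6)‼ = (n+6)*(n+4)*(n+2)*n‼ := by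
  rw [show n+6 = n+2+2+2 from by ring, Nat.doubleFactorial_add_two,
    Nat.doubleFactorial_add_two, Nat.doubleFactorial_add_two]; ring

-- core T inequality
lemma coreT (j t : ℕ) :
    (6*j+7)*(6*j+5)*(6*j+3)*((j+1+t)+1) ≤ (6*(j+1+t)+9)*(6*(j+1+t)+7)*(6*(j+1+t)+5)*(j+1) :=
  Nat.le.intro (k := 648*j^3+432*j^3*t + 2916*j^2 +2916*j^2*t+648*j^2*t^2
    + 4206*j+5400*j*t+2052*j*t^2+216*j*t^3 + 1935+2913*t+1404*t^2+216*t^3) (by ring)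

lemma coreU (j t : ℕ) :
    (6*j+9)*(6*j+7)*(6*j+5)*((j+2+t)+1) ≤ (6*(j+2+t)+7)*(6*(j+2+t)+5)*(6*(j+2+t)+3)*(j+1) :=
  Nat.le.intro (k := 648*j^3+432*j^3*t + 3888*j^2+3564*j^2*t+648*j^2*t^2
    + 7134*j+7992*j*t+2484*j*t^2+216*j*t^3 + 3900+4863*t+1836*t^2+216*t^3) (by ring)

lemma coreV (p t : ℕ) :
    (6*p+5)*(6*p+3)*(6*p+1)*(t+1)*((p+1+t)+2) ≤
      (6*(p+1+t)+11)*(6*(p+1+t)+9)*(6*(p+1+t)+7)*(t+3)*(p+1) :=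
  Nat.le.intro (k := 432*p^4 + 4536*p^3+2592*p^3*t+432*p^3*t^2
    + 15828*p^2+15876*p^2*t+5508*p^2*t^2+648*p^2*t^3
    + 21594*p+28572*p*t+13932*p*t^2+2916*p*t^3+216*p*t^4
    + 9900+15333*t+8871*t^2+2268*t^3+216*t^4) (by ring)

def fT (j d : ℕ) : ℚ := ((6*d+3)‼ : ℚ) * ((6*j+1)‼ : ℚ) / ((j ! : ℚ) * (d ! : ℚ))
def fU (j d : ℕ) : ℚ := ((6*d+1)‼ : ℚ) * ((6*j+3)‼ : ℚ) / ((j ! : ℚ) * (d ! : ℚ))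
def fV (p d : ℕ) : ℚ := ((6*d+5)‼ : ℚ) * ((6*p-1)‼ : ℚ) * ((d+1-p : ℕ) : ℚ)
    / ((p ! : ℚ) * ((d+1)! : ℚ))

lemma fT_nonneg (j d : ℕ) : 0 ≤ fT j d := by
  unfold fT; positivity
lemma fU_nonneg (j d : ℕ) : 0 ≤ fU j d := by
  unfold fU; positivity
lemma fV_nonneg (p d : ℕ) : 0 ≤ fV p d := by
  unfold fV; positivity

lemma Tmono (j e : ℕ) (h : j+1 ≤ e) : fT (j+1) e ≤ fT j (e+1) := by
  obtain ⟨t, rfl⟩ := Nat.exists_eq_add_of_le h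
  unfold fT
  rw [div_le_div_iff₀ (by positivity) (by positivity)]
  have key : (6*(j+1+t)+3)‼ * (6*(j+1)+1)‼ * ((j)! * ((j+1+t+1))!) ≤
      (6*(j+1+t+1)+3)‼ * (6*j+1)‼ * (((j+1))! * ((j+1+t))!) := by
    calc (6*(j+1+t)+3)‼ * (6*(j+1)+1)‼ * ((j)! * ((j+1+t+1))!)
        = ((6*j+7)*(6*j+5)*(6*j+3)*((j+1+t)+1)) * ((6*(j+1+t)+3)‼ * (6*j+1)‼ * ((j)! * ((j+1+t))!)) := by
          rw [show 6*(j+1)+1 = (6*j+1)+6 from by ring, dfac6, Nat.factorial_succ]; ring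
      _ ≤ ((6*(j+1+t)+9)*(6*(j+1+t)+7)*(6*(j+1+t)+5)*(j+1)) * ((6*(j+1+t)+3)‼ * (6*j+1)‼ * ((j)! * ((j+1+t))!)) :=
          mul_le_mul_left (coreT j t) _
      _ = (6*(j+1+t+1)+3)‼ * (6*j+1)‼ * (((j+1))! * ((j+1+t))!) := by
          rw [show 6*(j+1+t+1)+3 = (6*(j+1+t)+3)+6 from by ring, dfac6, Nat.factorial_succ]; ring
  exact_mod_cast key

lemma Umono (j e : ℕ) (h : j+2 ≤ e) : fU (j+1) e ≤ fU j (e+1) := by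
  obtain ⟨t, rfl⟩ := Nat.exists_eq_add_of_le h
  unfold fU
  rw [div_le_div_iff₀ (by positivity) (by positivity)]
  have key : (6*(j+2+t)+1)‼ * (6*(j+1)+3)‼ * ((j)! * ((j+2+t+1))!) ≤
      (6*(j+2+t+1)+1)‼ * (6*j+3)‼ * (((j+1))! * ((j+2+t))!) := by
    calc (6*(j+2+t)+1)‼ * (6*(j+1)+3)‼ * ((j)! * ((j+2+t+1))!)
        = ((6*j+9)*(6*j+7)*(6*j+5)*((j+2+t)+1)) * ((6*(j+2+t)+1)‼ * (6*j+3)‼ * ((j)! * ((j+2+t))!)) := by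
          rw [show 6*(j+1)+3 = (6*j+3)+6 from by ring, dfac6, Nat.factorial_succ]; ring
      _ ≤ ((6*(j+2+t)+7)*(6*(j+2+t)+5)*(6*(j+2+t)+3)*(j+1)) * ((6*(j+2+t)+1)‼ * (6*j+3)‼ * ((j)! * ((j+2+t))!)) :=
          mul_le_mul_left (coreU j t) _
      _ = (6*(j+2+t+1)+1)‼ * (6*j+3)‼ * (((j+1))! * ((j+2+t))!) := by
          rw [show 6*(j+2+t+1)+1 = (6*(j+2+t)+1)+6 from by ring, dfac6, Nat.factorial_succ]; ring
  exact_mod_cast key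

lemma Vmono (p e : ℕ) (hp : 1 ≤ p) (h : p+1 ≤ e) : fV (p+1) e ≤ fV p (e+1) := by
  obtain ⟨t, rfl⟩ := Nat.exists_eq_add_of_le h
  unfold fV
  rw [div_le_div_iff₀ (by positivity) (by positivity)]
  rw [show p+1+t+1-(p+1) = t+1 from by omega, show p+1+t+1+1-p = t+3 from by omega]
  have key : (6*(p+1+t)+5)‼ * (6*(p+1)-1)‼ * (t+1) * ((p)! * ((p+1+t+1+1))!) ≤
      (6*(p+1+t+1)+5)‼ * (6*p-1)‼ * (t+3) * (((p+1))! * ((p+1+t+1))!) := by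
    calc (6*(p+1+t)+5)‼ * (6*(p+1)-1)‼ * (t+1) * ((p)! * ((p+1+t+1+1))!)
        = ((6*p+5)*(6*p+3)*(6*p+1)*(t+1)*((p+1+t)+2)) *
            ((6*(p+1+t)+5)‼ * (6*p-1)‼ * ((p)! * ((p+1+t+1))!)) := by
          rw [show 6*(p+1)-1 = (6*p-1)+6 from by omega, dfac6,
            show (6*p-1)+6 = 6*p+5 from by omega, show (6*p-1)+4 = 6*p+3 from by omega,
            show (6*p-1)+2 = 6*p+1 from by omega, Nat.factorial_succ (p+1+t+1)]
          ring
      _ ≤ ((6*(p+1+t)+11)*(6*(p+1+t)+9)*(6*(p+1+t)+7)*(t+3)*(p+1)) *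
            ((6*(p+1+t)+5)‼ * (6*p-1)‼ * ((p)! * ((p+1+t+1))!)) :=
          mul_le_mul_left (coreV p t) _
      _ = (6*(p+1+t+1)+5)‼ * (6*p-1)‼ * (t+3) * (((p+1))! * ((p+1+t+1))!) := by
          rw [show 6*(p+1+t+1)+5 = (6*(p+1+t)+5)+6 from by ring, dfac6, Nat.factorial_succ p]; ring
  exact_mod_cast key

lemma fact2 (n : ℕ) : (n+2)! = (n+2)*(n+1)*n ! := by
  rw [show n+2 = (n+1)+1 from by ring, Nat.factorial_succ, Nat.factorial_succ]; ring

lemma fact6 (n : ℕ) : (n+6)! = (n+6)*(n+5)*(n+4)*(n+3)*(n+2)*(n+1)*n ! := by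
  rw [show n+6 = (n+4)+2 from by ring, fact2, show n+4 = (n+2)+2 from by ring, fact2, fact2]; ring

lemma fact12 (n : ℕ) : (n+12)! = (n+12)*(n+11)*(n+10)*(n+9)*(n+8)*(n+7)*(n+6)*(n+5)*(n+4)*(n+3)*(n+2)*(n+1)*n ! := by
  rw [show n+12 = (n+6)+6 from by ring, fact6, fact6]; ring


set_option maxHeartbeats 1000000 in
lemma myRval (w : ℕ) : R (w+5) 2 = 10395/2 * ((w:ℚ)+5) * ((w:ℚ)+4) /
    ((6*(w:ℚ)+29)*(6*(w:ℚ)+27)*(6*(w:ℚ)+25)*(6*(w:ℚ)+23)*(6*(w:ℚ)+21)*(6*(w:ℚ)+19)) := by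
  unfold R
  rw [Nat.cast_choose (K := ℚ) (show 3*2 ≤ 3*(w+5) by omega),
    Nat.cast_choose (K := ℚ) (show 2 ≤ w+5 by omega),
    Nat.cast_choose (K := ℚ) (show 6*2 ≤ 6*(w+5) by omega),
    show 3*(w+5) - 3*2 = 3*w+9 from by omega,
    show 3*(w+5) = (3*w+9)+6 from by omega,
    show w+5 - 2 = w+3 from by omega,
    show w+5 = (w+3)+2 from by omega,
    show 6*((w+3)+2) - 6*2 = 6*w+18 from by omega,
    show 6*((w+3)+2) = (6*w+18)+12 from by omega,
    fact6 (3*w+9), fact2 (w+3), fact12 (6*w+18), show (3*2) = 6 from rfl, show (6*2) = 12 from rfl]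
  have h4 : ((6:ℕ)! : ℚ) = 720 := by norm_num [Nat.factorial]
  have h5 : ((2:ℕ)! : ℚ) = 2 := by norm_num [Nat.factorial]
  have h6 : ((12:ℕ)! : ℚ) = 479001600 := by norm_num [Nat.factorial]
  rw [h4, h5, h6]
  push_cast
  rw [div_eq_div_iff (by positivity) (by positivity)]
  field_simp
  ring

noncomputable def Cw (w : ℕ) : ℚ := ((w+4)! : ℚ) / ((6*w+29)‼ : ℚ)

lemma Cw_nonneg (w : ℕ) : 0 ≤ Cw w := by unfold Cw; positivity

lemma dfacP6 (w : ℕ) : (6*w+29)‼ =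
    (6*w+29)*(6*w+27)*(6*w+25)*(6*w+23)*(6*w+21)*(6*w+19)*(6*w+17)‼ := by
  rw [show 6*w+29 = (6*w+23)+6 from by ring, dfac6, show 6*w+23 = (6*w+17)+6 from by ring, dfac6]
  ring

lemma dfac15 : (15 : ℕ)‼ = 2027025 := by decide
lemma dfac13 : (13 : ℕ)‼ = 135135 := by decide
lemma dfac11 : (11 : ℕ)‼ = 10395 := by decide

lemma baseT (w : ℕ) : 2 * Cw w * fT 2 (w+2) ≤ R (w+5) 2 := by
  have hL : 2 * Cw w * fT 2 (w+2) = 135135 * ((w:ℚ)+4) * ((w:ℚ)+3) /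
      (((6*(w:ℚ)+29)*(6*(w:ℚ)+27)*(6*(w:ℚ)+25)*(6*(w:ℚ)+23)*(6*(w:ℚ)+21)*(6*(w:ℚ)+19))
        * (6*(w:ℚ)+17)) := by
    unfold Cw fT
    rw [show 6*(w+2)+3 = 6*w+15 from by ring, show 6*2+1 = 13 from rfl, dfac13,
      show w+4 = (w+2)+2 from by ring, fact2, dfacP6,
      show 6*w+17 = (6*w+15)+2 from by ring, Nat.doubleFactorial_add_two]
    have h1 : ((6*w+15)‼ : ℚ) ≠ 0 := by
      have := dfac_pos (6*w+15); positivity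
    have h2 : ((w+2)! : ℚ) ≠ 0 := by positivity
    have h3 : ((2:ℕ)! : ℚ) = 2 := by norm_num [Nat.factorial]
    rw [h3]
    push_cast
    field_simp
    ring
  rw [hL, myRval]
  have h17 : (6*(w:ℚ)+17) ≠ 0 := by positivity
  calc 135135 * ((w:ℚ)+4) * ((w:ℚ)+3) /
      (((6*(w:ℚ)+29)*(6*(w:ℚ)+27)*(6*(w:ℚ)+25)*(6*(w:ℚ)+23)*(6*(w:ℚ)+21)*(6*(w:ℚ)+19))
        * (6*(w:ℚ)+17))
      ≤ (10395/2 * ((w:ℚ)+5) * ((w:ℚ)+4) * (6*(w:ℚ)+17)) /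
      (((6*(w:ℚ)+29)*(6*(w:ℚ)+27)*(6*(w:ℚ)+25)*(6*(w:ℚ)+23)*(6*(w:ℚ)+21)*(6*(w:ℚ)+19))
        * (6*(w:ℚ)+17)) := by
        have hw : (0:ℚ) ≤ (w:ℚ) := Nat.cast_nonneg w
        have hD : (0:ℚ) < ((6*(w:ℚ)+29)*(6*(w:ℚ)+27)*(6*(w:ℚ)+25)*(6*(w:ℚ)+23)*(6*(w:ℚ)+21)*(6*(w:ℚ)+19))
            * (6*(w:ℚ)+17) := by positivity
        exact (div_le_div_iff_of_pos_right hD).mpr (by nlinarith [hw, mul_nonneg hw hw, mul_nonneg (mul_nonneg hw hw) hw])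
    _ = 10395/2 * ((w:ℚ)+5) * ((w:ℚ)+4) /
      ((6*(w:ℚ)+29)*(6*(w:ℚ)+27)*(6*(w:ℚ)+25)*(6*(w:ℚ)+23)*(6*(w:ℚ)+21)*(6*(w:ℚ)+19)) := by
        rw [mul_div_mul_right _ _ h17]

lemma baseU (w : ℕ) : 2 * Cw w * fU 2 (w+2) ≤ R (w+5) 2 := by
  have hL : 2 * Cw w * fU 2 (w+2) = 2027025 * ((w:ℚ)+4) * ((w:ℚ)+3) /
      (((6*(w:ℚ)+29)*(6*(w:ℚ)+27)*(6*(w:ℚ)+25)*(6*(w:ℚ)+23)*(6*(w:ℚ)+21)*(6*(w:ℚ)+19))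
        * ((6*(w:ℚ)+17)*(6*(w:ℚ)+15))) := by
    unfold Cw fU
    rw [show 6*(w+2)+1 = 6*w+13 from by ring, show 6*2+3 = 15 from rfl, dfac15,
      show w+4 = (w+2)+2 from by ring, fact2, dfacP6,
      show 6*w+17 = ((6*w+13)+2)+2 from by ring, Nat.doubleFactorial_add_two,
      Nat.doubleFactorial_add_two]
    have h1 : ((6*w+13)‼ : ℚ) ≠ 0 := by
      have := dfac_pos (6*w+13); positivity
    have h2 : ((w+2)! : ℚ) ≠ 0 := by positivity
    have h3 : ((2:ℕ)! : ℚ) = 2 := by norm_num [Nat.factorial]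
    rw [h3]
    push_cast
    field_simp
    ring
  rw [hL, myRval]
  have h17 : ((6*(w:ℚ)+17)*(6*(w:ℚ)+15)) ≠ 0 := by positivity
  calc 2027025 * ((w:ℚ)+4) * ((w:ℚ)+3) /
      (((6*(w:ℚ)+29)*(6*(w:ℚ)+27)*(6*(w:ℚ)+25)*(6*(w:ℚ)+23)*(6*(w:ℚ)+21)*(6*(w:ℚ)+19))
        * ((6*(w:ℚ)+17)*(6*(w:ℚ)+15)))
      ≤ (10395/2 * ((w:ℚ)+5) * ((w:ℚ)+4) * ((6*(w:ℚ)+17)*(6*(w:ℚ)+15))) /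
      (((6*(w:ℚ)+29)*(6*(w:ℚ)+27)*(6*(w:ℚ)+25)*(6*(w:ℚ)+23)*(6*(w:ℚ)+21)*(6*(w:ℚ)+19))
        * ((6*(w:ℚ)+17)*(6*(w:ℚ)+15))) := by
        have hw : (0:ℚ) ≤ (w:ℚ) := Nat.cast_nonneg w
        have hD : (0:ℚ) < ((6*(w:ℚ)+29)*(6*(w:ℚ)+27)*(6*(w:ℚ)+25)*(6*(w:ℚ)+23)*(6*(w:ℚ)+21)*(6*(w:ℚ)+19))
            * ((6*(w:ℚ)+17)*(6*(w:ℚ)+15)) := by positivity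
        refine (div_le_div_iff_of_pos_right hD).mpr ?_
        nlinarith [hw, mul_nonneg hw hw, mul_nonneg (mul_nonneg hw hw) hw,
          mul_nonneg (mul_nonneg (mul_nonneg hw hw) hw) hw]
    _ = 10395/2 * ((w:ℚ)+5) * ((w:ℚ)+4) /
      ((6*(w:ℚ)+29)*(6*(w:ℚ)+27)*(6*(w:ℚ)+25)*(6*(w:ℚ)+23)*(6*(w:ℚ)+21)*(6*(w:ℚ)+19)) := by
        rw [mul_div_mul_right _ _ h17]

lemma baseV (w : ℕ) : Cw w * fV 2 (w+2) ≤ R (w+5) 2 := by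
  have hL : Cw w * fV 2 (w+2) = 10395/2 * ((w:ℚ)+4) * ((w:ℚ)+1) /
      ((6*(w:ℚ)+29)*(6*(w:ℚ)+27)*(6*(w:ℚ)+25)*(6*(w:ℚ)+23)*(6*(w:ℚ)+21)*(6*(w:ℚ)+19)) := by
    unfold Cw fV
    rw [show 6*(w+2)+5 = 6*w+17 from by ring, show 6*2-1 = 11 from rfl, dfac11,
      show w+2+1-2 = w+1 from by omega, show w+2+1 = w+3 from by ring,
      show w+4 = (w+3)+1 from by ring, Nat.factorial_succ, dfacP6]
    have h1 : ((6*w+17)‼ : ℚ) ≠ 0 := by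
      have := dfac_pos (6*w+17); positivity
    have h2 : ((w+3)! : ℚ) ≠ 0 := by positivity
    have h3 : ((2:ℕ)! : ℚ) = 2 := by norm_num [Nat.factorial]
    rw [h3]
    push_cast
    field_simp
    ring
  rw [hL, myRval]
  have hw : (0:ℚ) ≤ (w:ℚ) := Nat.cast_nonneg w
  have hD : (0:ℚ) < (6*(w:ℚ)+29)*(6*(w:ℚ)+27)*(6*(w:ℚ)+25)*(6*(w:ℚ)+23)*(6*(w:ℚ)+21)*(6*(w:ℚ)+19) := by
    positivity
  exact (div_le_div_iff_of_pos_right hD).mpr (by nlinarith [hw, mul_nonneg hw hw])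

lemma Tbound (w j : ℕ) (hj2 : 2 ≤ j) : 2*j+1 ≤ w+5 → 2 * Cw w * fT j (w+4-j) ≤ R (w+5) 2 := by
  induction j, hj2 using Nat.le_induction with
  | base => intro _; rw [show w+4-2 = w+2 from by omega]; exact baseT w
  | succ j hj ih =>
    intro hjg
    have step : fT (j+1) (w+4-(j+1)) ≤ fT j (w+4-j) := by
      rw [show w+4-j = (w+4-(j+1))+1 from by omega]
      exact Tmono j (w+4-(j+1)) (by omega)
    calc 2 * Cw w * fT (j+1) (w+4-(j+1)) ≤ 2 * Cw w * fT j (w+4-j) := by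
          have := Cw_nonneg w
          exact mul_le_mul_of_nonneg_left step (by positivity)
      _ ≤ R (w+5) 2 := ih (by omega)

lemma Ubound (w j : ℕ) (hj2 : 2 ≤ j) : 2*j+2 ≤ w+5 → 2 * Cw w * fU j (w+4-j) ≤ R (w+5) 2 := by
  induction j, hj2 using Nat.le_induction with
  | base => intro _; rw [show w+4-2 = w+2 from by omega]; exact baseU w
  | succ j hj ih =>
    intro hjg
    have step : fU (j+1) (w+4-(j+1)) ≤ fU j (w+4-j) := by
      rw [show w+4-j = (w+4-(j+1))+1 from by omega]
      exact Umono j (w+4-(j+1)) (by omega)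
    calc 2 * Cw w * fU (j+1) (w+4-(j+1)) ≤ 2 * Cw w * fU j (w+4-j) := by
          have := Cw_nonneg w
          exact mul_le_mul_of_nonneg_left step (by positivity)
      _ ≤ R (w+5) 2 := ih (by omega)

lemma Vbound (w p : ℕ) (hp2 : 2 ≤ p) : 2*p+1 ≤ w+5 → Cw w * fV p (w+4-p) ≤ R (w+5) 2 := by
  induction p, hp2 using Nat.le_induction with
  | base => intro _; rw [show w+4-2 = w+2 from by omega]; exact baseV w
  | succ p hp ih =>
    intro hpg
    have step : fV (p+1) (w+4-(p+1)) ≤ fV p (w+4-p) := by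
      rw [show w+4-p = (w+4-(p+1))+1 from by omega]
      exact Vmono p (w+4-(p+1)) (by omega) (by omega)
    calc Cw w * fV (p+1) (w+4-(p+1)) ≤ Cw w * fV p (w+4-p) :=
          mul_le_mul_of_nonneg_left step (Cw_nonneg w)
      _ ≤ R (w+5) 2 := ih (by omega)

noncomputable def del (g k : ℕ) : ℚ :=
  ((6 * g - 3 - 2 * k)‼ : ℚ) / ((6 * g - 1)‼ : ℚ) * Dterm g k

lemma del_3j (w j : ℕ) (h2 : 2 ≤ j) (h : 2*j+1 ≤ w+5) :
    del (w+5) (3*j) = -(2 * Cw w * fT j (w+4-j)) := by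
  unfold del Dterm Cw fT
  rw [if_neg (by omega), if_pos (by omega),
    show 3*j/3 = j from by omega,
    show 6*(w+5)-3-2*(3*j) = 6*(w+4-j)+3 from by omega,
    show 6*(w+5)-1 = 6*w+29 from by omega,
    show (w+5)-1 = w+4 from by omega,
    show w+4-j = w+4-j from rfl]
  have h1 : ((6*w+29)‼ : ℚ) ≠ 0 := by have := dfac_pos (6*w+29); positivity
  have h2 : ((j)! : ℚ) ≠ 0 := by positivity
  have h3 : (((w+4-j))! : ℚ) ≠ 0 := by positivity
  field_simp

lemma del_3j1 (w j : ℕ) (h2 : 2 ≤ j) (h : 2*j+2 ≤ w+5) :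
    del (w+5) (3*j+1) = 2 * Cw w * fU j (w+4-j) := by
  unfold del Dterm Cw fU
  rw [if_neg (by omega), if_neg (by omega),
    show (3*j+1-1)/3 = j from by omega,
    show 6*(w+5)-3-2*(3*j+1) = 6*(w+4-j)+1 from by omega,
    show 6*(w+5)-1 = 6*w+29 from by omega,
    show (w+5)-1 = w+4 from by omega]
  have h1 : ((6*w+29)‼ : ℚ) ≠ 0 := by have := dfac_pos (6*w+29); positivity
  have h2 : ((j)! : ℚ) ≠ 0 := by positivity
  have h3 : (((w+4-j))! : ℚ) ≠ 0 := by positivity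
  field_simp

lemma del_3j2 (w j : ℕ) (h1 : 1 ≤ j) (h : 2*j+3 ≤ w+5) :
    del (w+5) (3*j+2) = Cw w * fV (j+1) (w+3-j) := by
  unfold del Dterm Cw fV
  rw [if_pos (by omega),
    show (3*j+2+1)/3 = j+1 from by omega,
    show 6*(w+5)-3-2*(3*j+2) = 6*(w+3-j)+5 from by omega,
    show 6*(w+5)-1 = 6*w+29 from by omega,
    show (w+5)-1 = w+4 from by omega,
    show (w+5)-(j+1) = (w+3-j)+1 from by omega,
    show 6*(j+1)-1 = 6*j+5 from by omega,
    show (w+3-j)+1-(j+1) = w+3-2*j from by omega]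
  have hq : ((3*j+2 : ℕ) : ℚ) = 3*(j:ℚ)+2 := by push_cast; ring
  rw [hq]
  have hcast : ((w+3-2*j : ℕ) : ℚ) = (w:ℚ)+3-2*(j:ℚ) := by
    rw [Nat.cast_sub (by omega : 2*j ≤ w+3)]; push_cast; ring
  rw [hcast]
  have hd1 : ((6*w+29)‼ : ℚ) ≠ 0 := by have := dfac_pos (6*w+29); positivity
  have hd2 : (((j+1))! : ℚ) ≠ 0 := by positivity
  have hd3 : ((((w+3-j)+1))! : ℚ) ≠ 0 := by positivity
  have hval : ((w+5 : ℕ) : ℚ) - 2*((3*(j:ℚ)+2+1)/3) = (w:ℚ)+3-2*(j:ℚ) := by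
    push_cast; ring
  rw [hval]
  field_simp

lemma del_cases (w i : ℕ) (hi : 5 ≤ i) (hr : 2*i ≤ 3*w+12) :
    (i % 3 = 0 → -(R (w+5) 2) ≤ del (w+5) i ∧ del (w+5) i ≤ 0) ∧
    (i % 3 ≠ 0 → 0 ≤ del (w+5) i ∧ del (w+5) i ≤ R (w+5) 2) := by
  have h02 : (0:ℚ) ≤ 2 := by norm_num
  obtain ⟨j, hj | hj | hj⟩ : ∃ j, i = 3*j ∨ i = 3*j+1 ∨ i = 3*j+2 := ⟨i/3, by omega⟩
  · subst hj
    have h2 : 2 ≤ j := by omega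
    have hle : 2*j+1 ≤ w+5 := by omega
    rw [del_3j w j h2 hle]
    refine ⟨fun _ => ⟨neg_le_neg (Tbound w j h2 hle), ?_⟩, fun h3 => absurd (by omega) h3⟩
    exact neg_nonpos.mpr (mul_nonneg (mul_nonneg h02 (Cw_nonneg w)) (fT_nonneg _ _))
  · subst hj
    have h2 : 2 ≤ j := by omega
    have hle : 2*j+2 ≤ w+5 := by omega
    rw [del_3j1 w j h2 hle]
    refine ⟨fun h0 => absurd h0 (by omega), fun _ =>
      ⟨mul_nonneg (mul_nonneg h02 (Cw_nonneg w)) (fU_nonneg _ _), Ubound w j h2 hle⟩⟩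
  · subst hj
    have h1 : 1 ≤ j := by omega
    have hle : 2*j+3 ≤ w+5 := by omega
    rw [del_3j2 w j h1 hle]
    refine ⟨fun h0 => absurd h0 (by omega), fun _ =>
      ⟨mul_nonneg (Cw_nonneg w) (fV_nonneg _ _), ?_⟩⟩
    have := Vbound w (j+1) (by omega) (by omega)
    rwa [show w+4-(j+1) = w+3-j from by omega] at this

lemma count0 (k : ℕ) (hk : 5 ≤ k) :
    ((Finset.Ico 5 k).filter (fun i => i % 3 = 0)).card = (k-1)/3 - 1 := by
  induction k, hk using Nat.le_induction with
  | base => simp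
  | succ k hk ih =>
    rw [Nat.Ico_succ_right_eq_insert_Ico hk, Finset.filter_insert]
    split_ifs with h
    · rw [Finset.card_insert_of_notMem (by simp)]
      omega
    · omega

/-- `-R(g,2)·(g-3)/2 ≤ a_{g,k} - a_{g,5} ≤ R(g,2)·(3g-11)/3`
for `6 ≤ k ≤ ⌊(3g-1)/2⌋`. -/
theorem stmt13 (g : ℕ) (hg : 1 ≤ g) (a : ℕ → ℚ) (ha : IsCorr g a)
    (k : ℕ) (hk6 : 6 ≤ k) (hk : k ≤ (3 * g - 1) / 2) :
    -(R g 2 * ((g : ℚ) - 3) / 2) ≤ a k - a 5 ∧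
      a k - a 5 ≤ R g 2 * (3 * (g : ℚ) - 11) / 3 := by
  have hg5 : 5 ≤ g := by omega
  obtain ⟨w, rfl⟩ : ∃ w, g = w+5 := ⟨g-5, by omega⟩
  obtain ⟨h0, hrec, hsym⟩ := ha
  have hkk : 2*k ≤ 3*w+14 := by omega
  set s : Finset ℕ := Finset.Ico 5 k with hs
  have htel : a k - a 5 = ∑ i ∈ s, del (w+5) i := by
    have key : ∀ i ∈ s, del (w+5) i = a (i+1) - a i := by
      intro i hi
      rw [hs, Finset.mem_Ico] at hi
      unfold del
      exact (hrec i (by omega)).symm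
    rw [Finset.sum_congr rfl key, hs,
      Finset.sum_Ico_eq_sub _ (by omega : 5 ≤ k),
      Finset.sum_range_sub (f := a), Finset.sum_range_sub (f := a)]
    ring
  have hR : 0 ≤ R (w+5) 2 :=
    div_nonneg (mul_nonneg (Nat.cast_nonneg _) (Nat.cast_nonneg _)) (Nat.cast_nonneg _)
  have hdc : ∀ i ∈ s, 5 ≤ i ∧ 2*i ≤ 3*w+12 := by
    intro i hi; rw [hs, Finset.mem_Ico] at hi; omega
  have hsplit : ∑ i ∈ s, del (w+5) i =
      ∑ i ∈ s.filter (fun i => i % 3 = 0), del (w+5) i +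
      ∑ i ∈ s.filter (fun i => ¬ i % 3 = 0), del (w+5) i :=
    (Finset.sum_filter_add_sum_filter_not s _ _).symm
  set c0 := (s.filter (fun i => i % 3 = 0)).card with hc0def
  set c1 := (s.filter (fun i => ¬ i % 3 = 0)).card with hc1def
  have hc0 : c0 = (k-1)/3 - 1 := count0 k (by omega)
  have hc01 : c0 + c1 = k - 5 := by
    rw [hc0def, hc1def, Finset.card_filter_add_card_filter_not, hs, Nat.card_Ico]
  have hb0 : 2*c0 ≤ w+2 := by omega
  have hb1 : 3*c1 ≤ 3*w+4 := by omega
  -- upper bound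
  have hup : a k - a 5 ≤ (c1 : ℚ) * R (w+5) 2 := by
    rw [htel, hsplit]
    have h1 : ∑ i ∈ s.filter (fun i => i % 3 = 0), del (w+5) i ≤ 0 :=
      Finset.sum_nonpos (fun i hi => by
        rw [Finset.mem_filter] at hi
        obtain ⟨h5, h12⟩ := hdc i hi.1
        exact ((del_cases w i h5 h12).1 hi.2).2)
    have h2 : ∑ i ∈ s.filter (fun i => ¬ i % 3 = 0), del (w+5) i ≤ c1 • R (w+5) 2 :=
      Finset.sum_le_card_nsmul _ _ _ (fun i hi => by
        rw [Finset.mem_filter] at hi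
        obtain ⟨h5, h12⟩ := hdc i hi.1
        exact ((del_cases w i h5 h12).2 hi.2).2)
    rw [nsmul_eq_mul] at h2
    linarith
  -- lower bound
  have hlo : -((c0 : ℚ) * R (w+5) 2) ≤ a k - a 5 := by
    rw [htel, hsplit]
    have h1 : c0 • (-(R (w+5) 2)) ≤ ∑ i ∈ s.filter (fun i => i % 3 = 0), del (w+5) i :=
      Finset.card_nsmul_le_sum _ _ _ (fun i hi => by
        rw [Finset.mem_filter] at hi
        obtain ⟨h5, h12⟩ := hdc i hi.1
        exact ((del_cases w i h5 h12).1 hi.2).1)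
    have h2 : (0:ℚ) ≤ ∑ i ∈ s.filter (fun i => ¬ i % 3 = 0), del (w+5) i :=
      Finset.sum_nonneg (fun i hi => by
        rw [Finset.mem_filter] at hi
        obtain ⟨h5, h12⟩ := hdc i hi.1
        exact ((del_cases w i h5 h12).2 hi.2).1)
    rw [nsmul_eq_mul, mul_neg] at h1
    linarith
  constructor
  · refine le_trans ?_ hlo
    have hcast : (c0 : ℚ) ≤ (((w+5:ℕ) : ℚ) - 3)/2 := by
      have : (2*c0 : ℚ) ≤ ((w:ℚ)+2) := by exact_mod_cast hb0
      push_cast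
      linarith
    have := mul_le_mul_of_nonneg_right hcast hR
    rw [neg_le_neg_iff]
    calc (c0:ℚ) * R (w+5) 2 ≤ (((w+5:ℕ):ℚ) - 3)/2 * R (w+5) 2 := this
      _ = R (w+5) 2 * (((w+5:ℕ):ℚ) - 3) / 2 := by ring
  · refine hup.trans ?_
    have hcast : (c1 : ℚ) ≤ (3*((w+5:ℕ) : ℚ) - 11)/3 := by
      have : (3*c1 : ℚ) ≤ (3*(w:ℚ)+4) := by exact_mod_cast hb1
      push_cast
      linarith
    have := mul_le_mul_of_nonneg_right hcast hR
    calc (c1:ℚ) * R (w+5) 2 ≤ (3*((w+5:ℕ):ℚ) - 11)/3 * R (w+5) 2 := this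
      _ = R (w+5) 2 * (3*((w+5:ℕ):ℚ) - 11) / 3 := by ring
end

section
/- For every integer g ≥ 1 and every integer k with 2 ≤ k ≤ min(5, ⌊(3g−1)/2⌋), the strict inequalities 1 − 2/(6g−1) < a_{g,k} < 1 hold. -/
open Nat Real Filter

/-!
Telescoping the recurrence gives `a_{g,k} = 1 + δ₀ + ⋯ + δ_{k-1}` with
`δᵢ = D(g,i) / ((6g-1)(6g-3)⋯(6g-1-2i))`, and `1 - 2/(6g-1) = 1 + δ₀`. The increments have
signs `-, +, +, -, +`, so for `k ≤ 5` both bounds reduce to three rational inequalities in `g`: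
`δ₀ + δ₁ + δ₂ < 0`, `δ₁ + δ₂ + δ₃ > 0` for `g ≥ 3` (its numerator is `9 (g-2)(34g-35)`), and
`δ₃ + δ₄ < 0` for `g ≥ 4` (its numerator is `-1260 (g-1)(g-3)`).
-/

theorem Nat.doubleFactorial_add_two_mul (n k : ℕ) :
    (n + 2 * k)‼ = (∏ i ∈ Finset.range k, (n + 2 * (i + 1))) * n‼ := by
  induction k with
  | zero => simp
  | succ k ih =>
    rw [show n + 2 * (k + 1) = n + 2 * k + 2 by ring, Nat.doubleFactorial_add_two, ih,
      Finset.prod_range_succ]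
    ring

theorem Nat.cast_factorial_div_factorial_pred {K : Type*} [Field K] [CharZero K] {g : ℕ}
    (hg : 2 ≤ g) : ((g - 1)! : K) / ((g - 2)! : K) = g - 1 := by
  obtain ⟨m, rfl⟩ : ∃ m, g = m + 2 := ⟨g - 2, by omega⟩
  rw [show m + 2 - 1 = m + 1 by omega, Nat.add_sub_cancel, Nat.factorial_succ]
  push_cast
  rw [mul_div_cancel_right₀ _ (Nat.cast_ne_zero.mpr m.factorial_ne_zero)]
  ring

section Dterm

theorem Dterm_zero (g : ℕ) : Dterm g 0 = -2 := by
  simp [Dterm, Nat.doubleFactorial, Nat.factorial_ne_zero]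

theorem Dterm_one (g : ℕ) : Dterm g 1 = 6 := by
  simp [Dterm, Nat.doubleFactorial, Nat.factorial_ne_zero]
  norm_num

theorem Dterm_two (g : ℕ) : Dterm g 2 = 15 * ((g : ℚ) - 2) := by
  simp [Dterm, Nat.doubleFactorial, Nat.factorial_ne_zero]
  norm_num

theorem Dterm_three {g : ℕ} (hg : 2 ≤ g) : Dterm g 3 = -210 * ((g : ℚ) - 1) := by
  simp [Dterm, Nat.doubleFactorial]
  rw [show g - 1 - 1 = g - 2 by omega, Nat.cast_factorial_div_factorial_pred hg]
  ring

theorem Dterm_four {g : ℕ} (hg : 2 ≤ g) : Dterm g 4 = 1890 * ((g : ℚ) - 1) := by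
  simp [Dterm, Nat.doubleFactorial]
  rw [show g - 1 - 1 = g - 2 by omega, Nat.cast_factorial_div_factorial_pred hg]
  ring

end Dterm

noncomputable def corrIncrement (g k : ℕ) : ℚ :=
  ((6 * g - 3 - 2 * k)‼ : ℚ) / ((6 * g - 1)‼ : ℚ) * Dterm g k

theorem IsCorr.eq_one_add_sum {g : ℕ} {a : ℕ → ℚ} (ha : IsCorr g a) {k : ℕ}
    (hk : k ≤ (3 * g - 1) / 2) : a k = 1 + ∑ i ∈ Finset.range k, corrIncrement g i := by
  induction k with
  | zero => simpa using ha.1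
  | succ k ih =>
    rw [Finset.sum_range_succ, ← add_assoc, ← ih (by omega), corrIncrement, ← ha.2.1 k hk]
    ring

theorem corrIncrement_eq_div_prod {g k : ℕ} (hk : 2 * k + 3 ≤ 6 * g) :
    corrIncrement g k =
      Dterm g k / ∏ i ∈ Finset.range (k + 1), ((6 * g - 3 - 2 * k : ℚ) + 2 * (i + 1)) := by
  have hsplit : 6 * g - 1 = (6 * g - 3 - 2 * k) + 2 * (k + 1) := by omega
  rw [corrIncrement, hsplit, Nat.doubleFactorial_add_two_mul]
  push_cast [Nat.cast_sub (show 2 * k ≤ 6 * g - 3 by omega),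
    Nat.cast_sub (show 3 ≤ 6 * g by omega)]
  field_simp

section ClosedForms

variable {g : ℕ}

theorem corrIncrement_zero (hg : 1 ≤ g) : corrIncrement g 0 = -2 / (6 * g - 1) := by
  rw [corrIncrement_eq_div_prod (by omega), Dterm_zero]
  simp only [Finset.prod_range_succ, Finset.prod_range_zero]
  ring

theorem corrIncrement_one (hg : 1 ≤ g) :
    corrIncrement g 1 = 6 / ((6 * g - 1) * (6 * g - 3)) := by
  rw [corrIncrement_eq_div_prod (by omega), Dterm_one]
  simp only [Finset.prod_range_succ, Finset.prod_range_zero]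
  ring

theorem corrIncrement_two (hg : 2 ≤ g) :
    corrIncrement g 2 = 15 * (g - 2) / ((6 * g - 1) * (6 * g - 3) * (6 * g - 5)) := by
  rw [corrIncrement_eq_div_prod (by omega), Dterm_two]
  simp only [Finset.prod_range_succ, Finset.prod_range_zero]
  ring

theorem corrIncrement_three (hg : 2 ≤ g) : corrIncrement g 3 =
    -210 * (g - 1) / ((6 * g - 1) * (6 * g - 3) * (6 * g - 5) * (6 * g - 7)) := by
  rw [corrIncrement_eq_div_prod (by omega), Dterm_three hg]
  simp only [Finset.prod_range_succ, Finset.prod_range_zero]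
  ring

theorem corrIncrement_four (hg : 2 ≤ g) : corrIncrement g 4 =
    1890 * (g - 1) / ((6 * g - 1) * (6 * g - 3) * (6 * g - 5) * (6 * g - 7) * (6 * g - 9)) := by
  rw [corrIncrement_eq_div_prod (by omega), Dterm_four hg]
  simp only [Finset.prod_range_succ, Finset.prod_range_zero]
  ring

end ClosedForms

theorem corrIncrement_nonneg_of_Dterm_nonneg {g k : ℕ} (h : 0 ≤ Dterm g k) :
    0 ≤ corrIncrement g k := by
  unfold corrIncrement
  positivity

theorem corrIncrement_nonpos_of_Dterm_nonpos {g k : ℕ} (h : Dterm g k ≤ 0) :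
    corrIncrement g k ≤ 0 := by
  unfold corrIncrement
  exact mul_nonpos_of_nonneg_of_nonpos (by positivity) h

theorem corrIncrement_one_pos (g : ℕ) : 0 < corrIncrement g 1 := by
  unfold corrIncrement
  rw [Dterm_one]
  positivity

theorem corrIncrement_two_nonneg {g : ℕ} (hg : 2 ≤ g) : 0 ≤ corrIncrement g 2 := by
  apply corrIncrement_nonneg_of_Dterm_nonneg
  rw [Dterm_two]
  have : (2 : ℚ) ≤ g := by exact_mod_cast hg
  linarith

theorem corrIncrement_three_nonpos {g : ℕ} (hg : 2 ≤ g) : corrIncrement g 3 ≤ 0 := by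
  apply corrIncrement_nonpos_of_Dterm_nonpos
  rw [Dterm_three hg]
  have : (2 : ℚ) ≤ g := by exact_mod_cast hg
  linarith

theorem corrIncrement_four_nonneg {g : ℕ} (hg : 2 ≤ g) : 0 ≤ corrIncrement g 4 := by
  apply corrIncrement_nonneg_of_Dterm_nonneg
  rw [Dterm_four hg]
  have : (2 : ℚ) ≤ g := by exact_mod_cast hg
  linarith

theorem corrIncrement_zero_add_one_add_two_neg {g : ℕ} (hg : 2 ≤ g) :
    corrIncrement g 0 + corrIncrement g 1 + corrIncrement g 2 < 0 := by
  rw [corrIncrement_zero (by omega), corrIncrement_one (by omega), corrIncrement_two hg]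
  have hx : (2 : ℚ) ≤ g := by exact_mod_cast hg
  have h1 : (0 : ℚ) < 6 * g - 1 := by linarith
  have h3 : (0 : ℚ) < 6 * g - 3 := by linarith
  have h5 : (0 : ℚ) < 6 * g - 5 := by linarith
  field_simp
  nlinarith

theorem corrIncrement_one_add_two_add_three_pos {g : ℕ} (hg : 3 ≤ g) :
    0 < corrIncrement g 1 + corrIncrement g 2 + corrIncrement g 3 := by
  rw [corrIncrement_one (by omega), corrIncrement_two (by omega), corrIncrement_three (by omega)]
  have hx : (3 : ℚ) ≤ g := by exact_mod_cast hg
  have h1 : (0 : ℚ) < 6 * g - 1 := by linarith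
  have h3 : (0 : ℚ) < 6 * g - 3 := by linarith
  have h5 : (0 : ℚ) < 6 * g - 5 := by linarith
  have h7 : (0 : ℚ) < 6 * g - 7 := by linarith
  field_simp
  nlinarith

theorem corrIncrement_three_add_four_neg {g : ℕ} (hg : 4 ≤ g) :
    corrIncrement g 3 + corrIncrement g 4 < 0 := by
  rw [corrIncrement_three (by omega), corrIncrement_four (by omega)]
  have hx : (4 : ℚ) ≤ g := by exact_mod_cast hg
  have h9 : (0 : ℚ) < 6 * g - 9 := by linarith
  have hD : (0 : ℚ) < (6 * g - 1) * (6 * g - 3) * (6 * g - 5) * (6 * g - 7) := by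
    have : (0 : ℚ) < 6 * g - 7 := by linarith
    have : (0 : ℚ) < 6 * g - 5 := by linarith
    have : (0 : ℚ) < 6 * g - 3 := by linarith
    have : (0 : ℚ) < 6 * g - 1 := by linarith
    positivity
  generalize (6 * (g : ℚ) - 1) * (6 * g - 3) * (6 * g - 5) * (6 * g - 7) = D at hD ⊢
  have key : -210 * ((g : ℚ) - 1) / D + 1890 * (g - 1) / (D * (6 * g - 9))
      = -1260 * ((g - 1) * (g - 3)) / (D * (6 * g - 9)) := by
    rw [div_add_div _ _ hD.ne' (by positivity), div_eq_div_iff (by positivity) (by positivity)]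
    ring
  rw [key]
  exact div_neg_of_neg_of_pos (by nlinarith) (by positivity)

section PartialSums

variable {g k : ℕ}

theorem corrIncrement_zero_lt_sum (hk2 : 2 ≤ k) (hk5 : k ≤ 5) (hkg : k ≤ (3 * g - 1) / 2) :
    corrIncrement g 0 < ∑ i ∈ Finset.range k, corrIncrement g i := by
  have hδ1 := corrIncrement_one_pos g
  interval_cases k <;> simp only [Finset.sum_range_succ, Finset.sum_range_zero]
  · linarith
  · linarith [corrIncrement_two_nonneg (g := g) (by omega)]
  · linarith [corrIncrement_one_add_two_add_three_pos (g := g) (by omega)]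
  · linarith [corrIncrement_one_add_two_add_three_pos (g := g) (by omega),
      corrIncrement_four_nonneg (g := g) (by omega)]

theorem sum_corrIncrement_neg (hk2 : 2 ≤ k) (hk5 : k ≤ 5) (hkg : k ≤ (3 * g - 1) / 2) :
    ∑ i ∈ Finset.range k, corrIncrement g i < 0 := by
  have hδ012 := corrIncrement_zero_add_one_add_two_neg (g := g) (by omega)
  interval_cases k <;> simp only [Finset.sum_range_succ, Finset.sum_range_zero]
  · linarith [corrIncrement_two_nonneg (g := g) (by omega)]
  · linarith
  · linarith [corrIncrement_three_nonpos (g := g) (by omega)]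
  · linarith [corrIncrement_three_add_four_neg (g := g) (by omega)]

end PartialSums

theorem stmt16_general (g : ℕ) (a : ℕ → ℚ) (ha : IsCorr g a)
    (k : ℕ) (hk2 : 2 ≤ k) (hk : k ≤ min 5 ((3 * g - 1) / 2)) :
    1 - 2 / (6 * (g : ℚ) - 1) < a k ∧ a k < 1 := by
  have hk5 : k ≤ 5 := hk.trans (min_le_left _ _)
  have hkg : k ≤ (3 * g - 1) / 2 := hk.trans (min_le_right _ _)
  have hlower : 1 - 2 / (6 * (g : ℚ) - 1) = 1 + corrIncrement g 0 := by
    rw [corrIncrement_zero (by omega)]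
    ring
  rw [hlower, ha.eq_one_add_sum hkg]
  exact ⟨by linarith [corrIncrement_zero_lt_sum hk2 hk5 hkg],
    by linarith [sum_corrIncrement_neg hk2 hk5 hkg]⟩

/-- for `2 ≤ k ≤ min(5, ⌊(3g-1)/2⌋)`,
`1 - 2/(6g-1) < a_{g,k} < 1`. -/
theorem stmt16 (g : ℕ) (hg : 1 ≤ g) (a : ℕ → ℚ) (ha : IsCorr g a)
    (k : ℕ) (hk2 : 2 ≤ k) (hk : k ≤ min 5 ((3 * g - 1) / 2)) :
    1 - 2 / (6 * (g : ℚ) - 1) < a k ∧ a k < 1 :=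
  stmt16_general g a ha k hk2 hk
end

section
/- For every integer g ≥ 2, V1(g) > √(2/(3πg)) · (8/3)^{4g−4} · (1 − 2/(6g−7)). (Since V1(g) = Vol(Γ₁(g)) is one of the non-negative contributions summing to the Masur–Veech volume Vol 𝒬_{g,0}, this yields the paper's lower bound Vol 𝒬_{g,0} > √(2/(3πg))·(8/3)^{4g−4}·(1 − 2/(6g−7)).) -/
open Nat Real Filter


/-!
Every correlator is at least `a_{g,1} = 1 - 2/(6g-1)`: the increments of the recurrence at
`k ≡ 1, 2 (mod 3)` are nonnegative, and the negative increment at `k ≡ 0` is outweighed by the two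
preceding ones, so on the first half `a` never drops below `a_{g,1}`; symmetry covers the second half.
The odd-indexed binomial coefficients of `6g-6` sum to `2^{6g-7}`, `ζ(6g-6) > 1`, and
`C(4m, m) ≥ √(2/(3π(m+1))) (256/27)^m` because `C(4m, m) √(m+1) (27/256)^m` decreases to its
Stirling limit `√(2/(3π))`. Multiplying these bounds with `m = g - 1` gives the estimate.
-/

theorem Dterm_three_mul (g j : ℕ) :
    Dterm g (3 * j) =
      -2 * ((6 * j + 1)‼ : ℚ) / (j ! : ℚ) * (((g - 1)! : ℚ) / ((g - 1 - j)! : ℚ)) := by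
  rw [Dterm, if_neg (by omega), if_pos (by omega), Nat.mul_div_cancel_left j (by norm_num)]

theorem Dterm_three_mul_add_one (g j : ℕ) :
    Dterm g (3 * j + 1) =
      2 * ((6 * j + 3)‼ : ℚ) / (j ! : ℚ) * (((g - 1)! : ℚ) / ((g - 1 - j)! : ℚ)) := by
  rw [Dterm, if_neg (by omega), if_neg (by omega), show (3 * j + 1 - 1) / 3 = j by omega]

theorem Dterm_three_mul_add_two (g j : ℕ) :
    Dterm g (3 * j + 2) = ((6 * j + 5)‼ : ℚ) / ((j + 1)! : ℚ) *
      (((g - 1)! : ℚ) / ((g - (j + 1))! : ℚ)) * ((g : ℚ) - 2 * (j + 1)) := by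
  rw [Dterm, if_pos (by omega), show (3 * j + 2 + 1) / 3 = j + 1 by omega,
    show 6 * (j + 1) - 1 = 6 * j + 5 by omega]
  push_cast
  ring

/-- The increment `a_{g,k+1} - a_{g,k}` prescribed by the recurrence. -/
noncomputable def corrDelta (g k : ℕ) : ℚ :=
  ((6 * g - 3 - 2 * k)‼ : ℚ) / ((6 * g - 1)‼ : ℚ) * Dterm g k

theorem corrDelta_zero {g : ℕ} (hg : 1 ≤ g) : corrDelta g 0 = -2 / (6 * g - 1) := by
  obtain ⟨p, rfl⟩ : ∃ p, g = p + 1 := ⟨g - 1, by omega⟩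
  rw [corrDelta, Dterm_zero, show 6 * (p + 1) - 3 - 2 * 0 = 6 * p + 3 by omega,
    show 6 * (p + 1) - 1 = 6 * p + 3 + 2 by omega, Nat.doubleFactorial_add_two (6 * p + 3),
    Nat.cast_mul]
  push_cast
  have : ((6 * p + 3)‼ : ℚ) ≠ 0 := by positivity
  rw [show 6 * ((p : ℚ) + 1) - 1 = 6 * p + 3 + 2 by ring]
  field_simp

theorem corrDelta_three_mul_add_one_nonneg (g j : ℕ) : 0 ≤ corrDelta g (3 * j + 1) := by
  rw [corrDelta, Dterm_three_mul_add_one]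
  positivity

theorem corrDelta_three_mul_add_two_nonneg {g j : ℕ} (h : 2 * (j + 1) ≤ g) :
    0 ≤ corrDelta g (3 * j + 2) := by
  have hg : (2 * (j + 1) : ℚ) ≤ g := by exact_mod_cast h
  rw [corrDelta, Dterm_three_mul_add_two]
  have := sub_nonneg.2 hg
  positivity

theorem corrDelta_triple_nonneg {g j : ℕ} (h : 2 * j + 3 ≤ g) :
    0 ≤ corrDelta g (3 * j + 1) + corrDelta g (3 * j + 2) + corrDelta g (3 * (j + 1)) := by
  obtain ⟨u, rfl⟩ : ∃ u, g = j + 2 + u := ⟨g - j - 2, by omega⟩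
  have hju : (j : ℚ) + 1 ≤ u := by exact_mod_cast (by omega : j + 1 ≤ u)
  -- the three increments share the positive factor in `hP`; their sum is it times the cubic in `hQ`
  have hP : 0 < ((6 * u + 3)‼ * (6 * j + 3)‼ * (j + 1 + u)! : ℚ) /
      ((6 * (j + 2 + u) - 1)‼ * (j + 1)! * (u + 1)!) := by positivity
  have hQ : 0 ≤ 2 * ((j : ℚ) + 1) * (6 * u + 5) * (6 * u + 7)
      + (6 * j + 5) * (6 * u + 5) * (u - j) - 2 * (6 * j + 5) * (6 * j + 7) * (u + 1) := by
    have hj : (0 : ℚ) ≤ j := j.cast_nonneg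
    have hu : (0 : ℚ) ≤ u := u.cast_nonneg
    nlinarith [mul_nonneg (mul_nonneg hj hu) (sub_nonneg.2 hju)]
  refine (mul_nonneg hP.le hQ).trans_eq ?_
  simp only [corrDelta, Dterm_three_mul_add_one, Dterm_three_mul_add_two, Dterm_three_mul]
  rw [show 6 * (j + 2 + u) - 3 - 2 * (3 * j + 1) = 6 * u + 7 by omega,
    show 6 * (j + 2 + u) - 3 - 2 * (3 * j + 2) = 6 * u + 5 by omega,
    show 6 * (j + 2 + u) - 3 - 2 * (3 * (j + 1)) = 6 * u + 3 by omega,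
    show 6 * (j + 1) + 1 = 6 * j + 7 by omega, show j + 2 + u - 1 - j = u + 1 by omega,
    show j + 2 + u - (j + 1) = u + 1 by omega, show j + 2 + u - 1 - (j + 1) = u by omega,
    show j + 2 + u - 1 = j + 1 + u by omega]
  simp only [Nat.doubleFactorial_add_two, Nat.factorial_succ]
  push_cast
  field_simp
  ring

theorem apply_one_le_of_three_step_increments {α : Type*} [Preorder α] {a : ℕ → α} {N : ℕ}
    (h₁ : ∀ j, 3 * j + 2 ≤ N → a (3 * j + 1) ≤ a (3 * j + 2))
    (h₂ : ∀ j, 3 * j + 3 ≤ N → a (3 * j + 2) ≤ a (3 * j + 3))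
    (h₃ : ∀ j, 3 * j + 4 ≤ N → a (3 * j + 1) ≤ a (3 * j + 4)) :
    ∀ k, 1 ≤ k → k ≤ N → a 1 ≤ a k := by
  have hmain : ∀ j, 3 * j + 1 ≤ N → a 1 ≤ a (3 * j + 1) := by
    intro j
    induction j with
    | zero => exact fun _ => le_rfl
    | succ j ih => exact fun hj => (ih (by omega)).trans (h₃ j (by omega))
  intro k hk hkN
  obtain ⟨j, r, hr, rfl⟩ : ∃ j r, r < 3 ∧ k = 3 * j + 1 + r :=
    ⟨(k - 1) / 3, (k - 1) % 3, Nat.mod_lt _ (by norm_num), by omega⟩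
  interval_cases r
  · exact hmain j hkN
  · exact (hmain j (by omega)).trans (h₁ j hkN)
  · exact ((hmain j (by omega)).trans (h₁ j (by omega))).trans (h₂ j hkN)

theorem IsCorr.lower_bound {g : ℕ} (hg : 1 ≤ g) {a : ℕ → ℚ} (h : IsCorr g a) {k : ℕ}
    (hk : k ≤ 3 * g - 1) : 1 - 2 / (6 * (g : ℚ) - 1) ≤ a k := by
  obtain ⟨h0, hrec, hsym⟩ := h
  have step : ∀ i, i + 1 ≤ (3 * g - 1) / 2 → a (i + 1) = a i + corrDelta g i :=
    fun i hi => sub_eq_iff_eq_add'.1 (hrec i hi)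
  have ha1 : a 1 = 1 - 2 / (6 * (g : ℚ) - 1) := by
    rw [step 0 (by omega), h0, corrDelta_zero hg]
    ring
  have hlow : ∀ i, i ≤ (3 * g - 1) / 2 → a 1 ≤ a i := by
    intro i hi
    rcases Nat.eq_zero_or_pos i with rfl | hi0
    · have : (0 : ℚ) < 6 * g - 1 := by
        have : (1 : ℚ) ≤ g := by exact_mod_cast hg
        linarith
      rw [ha1, h0, sub_le_self_iff]
      positivity
    refine apply_one_le_of_three_step_increments (fun j hj => ?_) (fun j hj => ?_)
      (fun j hj => ?_) i hi0 hi
    · rw [step (3 * j + 1) hj]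
      exact le_add_of_nonneg_right (corrDelta_three_mul_add_one_nonneg g j)
    · rw [step (3 * j + 2) hj]
      exact le_add_of_nonneg_right (corrDelta_three_mul_add_two_nonneg (by omega))
    · have e₁ := step (3 * j + 1) (by omega)
      have e₂ := step (3 * j + 2) (by omega)
      have e₃ := step (3 * (j + 1)) (by omega)
      rw [show 3 * (j + 1) + 1 = 3 * j + 4 by ring] at e₃
      rw [show 3 * j + 2 + 1 = 3 * (j + 1) by ring] at e₂
      linarith [corrDelta_triple_nonneg (g := g) (j := j) (by omega)]
  rcases le_or_gt k ((3 * g - 1) / 2) with hkN | hkN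
  · exact ha1 ▸ hlow k hkN
  · rw [hsym k hk]
    exact ha1 ▸ hlow _ (by omega)

open Finset in
theorem sum_range_two_mul_eq {M : Type*} [AddCommMonoid M] (f : ℕ → M) (n : ℕ) :
    ∑ i ∈ range (2 * n), f i = ∑ k ∈ range n, (f (2 * k) + f (2 * k + 1)) := by
  induction n with
  | zero => simp
  | succ n ih =>
    rw [show 2 * (n + 1) = 2 * n + 1 + 1 by ring, sum_range_succ, sum_range_succ, ih,
      sum_range_succ, add_assoc]

open Finset in
theorem two_mul_sum_range_choose_odd {n : ℕ} (hn : n ≠ 0) :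
    2 * ∑ k ∈ range n, (2 * n).choose (2 * k + 1) = 4 ^ n := by
  obtain ⟨p, rfl⟩ : ∃ p, n = p + 1 := ⟨n - 1, by omega⟩
  have hpascal : ∑ k ∈ range (p + 1), (2 * (p + 1)).choose (2 * k + 1) = 2 ^ (2 * p + 1) := by
    calc ∑ k ∈ range (p + 1), (2 * (p + 1)).choose (2 * k + 1)
        = ∑ k ∈ range (p + 1), ((2 * p + 1).choose (2 * k) + (2 * p + 1).choose (2 * k + 1)) :=
          sum_congr rfl fun k _ => Nat.choose_succ_succ' (2 * p + 1) (2 * k)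
      _ = ∑ i ∈ range (2 * p + 1 + 1), (2 * p + 1).choose i := by
          rw [show 2 * p + 1 + 1 = 2 * (p + 1) by ring, sum_range_two_mul_eq]
      _ = 2 ^ (2 * p + 1) := Nat.sum_range_choose _
  rw [hpascal, show 4 ^ (p + 1) = 2 ^ (2 * (p + 1)) by rw [pow_mul]; norm_num]
  ring

open Finset in
theorem mul_four_pow_le_two_mul_sum_choose_odd_mul {n : ℕ} (hn : n ≠ 0) {f : ℕ → ℝ}
    {β : ℝ} (hf : ∀ k < n, β ≤ f k) :
    β * 4 ^ n ≤ 2 * ∑ k ∈ range n, ((2 * n).choose (2 * k + 1) : ℝ) * f k := by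
  have hsum : (4 : ℝ) ^ n = 2 * ∑ k ∈ range n, ((2 * n).choose (2 * k + 1) : ℝ) := by
    exact_mod_cast (two_mul_sum_range_choose_odd hn).symm
  calc β * 4 ^ n = 2 * ∑ k ∈ range n, ((2 * n).choose (2 * k + 1) : ℝ) * β := by
        rw [hsum, ← sum_mul]; ring
    _ ≤ 2 * ∑ k ∈ range n, ((2 * n).choose (2 * k + 1) : ℝ) * f k := by
        gcongr with k hk
        exact hf k (mem_range.1 hk)

theorem one_lt_zetaR {s : ℕ} (hs : 2 ≤ s) : 1 < zetaR s := by
  have hsum : Summable fun n : ℕ => (1 : ℝ) / (n + 1) ^ s := by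
    have := (summable_nat_add_iff 1).2 (Real.summable_one_div_nat_pow.2 hs)
    exact_mod_cast this
  rw [zetaR, hsum.tsum_eq_zero_add, Nat.cast_zero, zero_add, one_pow, div_one, lt_add_iff_pos_right]
  exact ((summable_nat_add_iff 1).2 hsum).tsum_pos (fun _ => by positivity) 0 (by positivity)

open Stirling Topology

theorem choose_four_mul_succ_mul (m : ℕ) :
    ((4 * (m + 1)).choose (m + 1) : ℝ) * ((m + 1) * (3 * m + 1) * (3 * m + 2) * (3 * m + 3)) =
      ((4 * m).choose m : ℝ) * ((4 * m + 1) * (4 * m + 2) * (4 * m + 3) * (4 * m + 4)) := by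
  have h₀ := Nat.choose_mul_factorial_mul_factorial (by omega : m ≤ 4 * m)
  have h₁ := Nat.choose_mul_factorial_mul_factorial (by omega : m + 1 ≤ 4 * (m + 1))
  rw [show 4 * m - m = 3 * m by omega] at h₀
  rw [show 4 * (m + 1) - (m + 1) = 3 * m + 3 by omega, show 4 * (m + 1) = 4 * m + 4 by ring] at h₁
  simp only [Nat.factorial_succ] at h₁
  have hpos : ((m ! * (3 * m)! : ℕ) : ℝ) ≠ 0 := by positivity
  apply mul_right_cancel₀ hpos
  rw [show 4 * (m + 1) = 4 * m + 4 by ring]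
  have h₀' : ((4 * m).choose m * m ! * (3 * m)! : ℝ) = (4 * m)! := by exact_mod_cast h₀
  have h₁' := congrArg (Nat.cast (R := ℝ)) h₁
  push_cast at h₀' h₁' ⊢
  linear_combination h₁' - (4 * (m : ℝ) + 1) * (4 * m + 2) * (4 * m + 3) * (4 * m + 4) * h₀'

/-- `C(4m, m)` with its exponential growth `(256/27)^m` and its decay `m^{-1/2}` normalized away;
the shift `m + 1` makes it antitone. -/
noncomputable def chooseFourMulSeq (m : ℕ) : ℝ :=
  ((4 * m).choose m : ℝ) * √(6 * (m + 1)) * (27 / 256) ^ m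

theorem mul_sqrt_le_mul_sqrt_of_sq {a b x y : ℝ} (ha : 0 ≤ a) (hb : 0 ≤ b)
    (h : a ^ 2 * x ≤ b ^ 2 * y) : a * √x ≤ b * √y := by
  rw [← Real.sqrt_sq ha, ← Real.sqrt_sq hb, ← Real.sqrt_mul (sq_nonneg a),
    ← Real.sqrt_mul (sq_nonneg b)]
  exact Real.sqrt_le_sqrt h

theorem chooseFourMulSeq_antitone : Antitone chooseFourMulSeq := by
  refine antitone_nat_of_succ_le fun m => ?_
  have hm : (0 : ℝ) ≤ m := m.cast_nonneg
  set P₃ : ℝ := (m + 1) * (3 * m + 1) * (3 * m + 2) * (3 * m + 3)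
  set P₄ : ℝ := (4 * m + 1) * (4 * m + 2) * (4 * m + 3) * (4 * m + 4)
  have hP₃ : 0 < P₃ := by positivity
  have hratio :
      27 * P₄ * √(6 * ((m : ℝ) + 1 + 1)) ≤ 256 * P₃ * √(6 * ((m : ℝ) + 1)) := by
    apply mul_sqrt_le_mul_sqrt_of_sq (by positivity) (by positivity)
    nlinarith [pow_nonneg hm 2, pow_nonneg hm 3, pow_nonneg hm 4, pow_nonneg hm 5,
      pow_nonneg hm 6, pow_nonneg hm 7, pow_nonneg hm 8, pow_nonneg hm 9]
  have hsucc := choose_four_mul_succ_mul m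
  simp only [chooseFourMulSeq, Nat.cast_succ, pow_succ]
  rw [← mul_le_mul_iff_of_pos_right hP₃]
  calc ((4 * (m + 1)).choose (m + 1) : ℝ) * √(6 * ((m : ℝ) + 1 + 1)) *
        ((27 / 256) ^ m * (27 / 256)) * P₃
      = ((4 * m).choose m : ℝ) * (27 / 256) ^ m / 256 *
          (27 * P₄ * √(6 * ((m : ℝ) + 1 + 1))) := by
        linear_combination (√(6 * ((m : ℝ) + 1 + 1)) * (27 / 256) ^ m * (27 / 256)) * hsucc
    _ ≤ ((4 * m).choose m : ℝ) * (27 / 256) ^ m / 256 *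
          (256 * P₃ * √(6 * ((m : ℝ) + 1))) := by
        gcongr
    _ = ((4 * m).choose m : ℝ) * √(6 * ((m : ℝ) + 1)) * (27 / 256) ^ m * P₃ := by ring

theorem factorial_eq_stirlingSeq_mul {n : ℕ} (hn : n ≠ 0) :
    (n ! : ℝ) = stirlingSeq n * (√(2 * n) * (n / exp 1) ^ n) := by
  rw [stirlingSeq, div_mul_cancel₀]
  positivity

theorem choose_four_mul_mul_sqrt_eq {m : ℕ} (hm : m ≠ 0) :
    ((4 * m).choose m : ℝ) * √(6 * m) * (27 / 256) ^ m =
      2 * stirlingSeq (4 * m) / (stirlingSeq m * stirlingSeq (3 * m)) := by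
  have h := Nat.choose_mul_factorial_mul_factorial (by omega : m ≤ 4 * m)
  rw [show 4 * m - m = 3 * m by omega] at h
  have h' := congrArg (Nat.cast (R := ℝ)) h
  push_cast at h'
  rw [factorial_eq_stirlingSeq_mul hm, factorial_eq_stirlingSeq_mul (by omega : 3 * m ≠ 0),
    factorial_eq_stirlingSeq_mul (by omega : 4 * m ≠ 0)] at h'
  have h₃ : ((3 * m : ℕ) / exp 1 : ℝ) ^ (3 * m) = 27 ^ m * ((m / exp 1) ^ m) ^ 3 := by
    rw [show ((3 * m : ℕ) : ℝ) / exp 1 = 3 * (m / exp 1) by push_cast; ring, mul_pow,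
      pow_mul (3 : ℝ), pow_mul' ((m : ℝ) / exp 1)]
    norm_num
  have h₄ : ((4 * m : ℕ) / exp 1 : ℝ) ^ (4 * m) = 256 ^ m * ((m / exp 1) ^ m) ^ 4 := by
    rw [show ((4 * m : ℕ) : ℝ) / exp 1 = 4 * (m / exp 1) by push_cast; ring, mul_pow,
      pow_mul (4 : ℝ), pow_mul' ((m : ℝ) / exp 1)]
    norm_num
  set x : ℝ := (m / exp 1) ^ m
  set y : ℝ := √(2 * m)
  have hx : 0 < x := by positivity
  have hy : 0 < y := Real.sqrt_pos.2 (by positivity)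
  have r₃ : √(2 * ((3 * m : ℕ) : ℝ)) = √3 * y := by
    rw [show 2 * ((3 * m : ℕ) : ℝ) = 3 * (2 * m) by push_cast; ring,
      Real.sqrt_mul (by norm_num)]
  have r₄ : √(2 * ((4 * m : ℕ) : ℝ)) = 2 * y := by
    rw [show 2 * ((4 * m : ℕ) : ℝ) = 2 ^ 2 * (2 * m) by push_cast; ring,
      Real.sqrt_mul (by norm_num), Real.sqrt_sq (by norm_num)]
  have r₆ : √(6 * (m : ℝ)) = √3 * y := by
    rw [show 6 * (m : ℝ) = 3 * (2 * m) by ring, Real.sqrt_mul (by norm_num)]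
  rw [h₃, h₄, r₃, r₄] at h'
  have hs : stirlingSeq m * stirlingSeq (3 * m) ≠ 0 := by
    obtain ⟨p, rfl⟩ : ∃ p, m = p + 1 := ⟨m - 1, by omega⟩
    exact (mul_pos (stirlingSeq'_pos p) (stirlingSeq'_pos (3 * p + 2))).ne'
  have hq : (27 / 256 : ℝ) ^ m * 256 ^ m = 27 ^ m := by rw [← mul_pow]; norm_num
  rw [r₆, eq_div_iff hs]
  have hne : y * x ^ 4 * 256 ^ m ≠ 0 := by positivity
  apply mul_right_cancel₀ hne
  linear_combination h' +
    ((4 * m).choose m : ℝ) * √3 * y ^ 2 * stirlingSeq m * stirlingSeq (3 * m) * x ^ 4 * hq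

theorem tendsto_two_mul_stirlingSeq_div :
    Tendsto (fun m => 2 * stirlingSeq (4 * m) / (stirlingSeq m * stirlingSeq (3 * m))) atTop
      (𝓝 (2 / √π)) := by
  have hs : ∀ k, 0 < k → Tendsto (fun m => stirlingSeq (k * m)) atTop (𝓝 √π) :=
    fun k hk => tendsto_stirlingSeq_sqrt_pi.comp (tendsto_id.const_mul_atTop' hk)
  have hπ : √π ≠ 0 := (Real.sqrt_pos.2 Real.pi_pos).ne'
  have h := ((hs 4 (by norm_num)).const_mul 2).div
    (tendsto_stirlingSeq_sqrt_pi.mul (hs 3 (by norm_num))) (mul_ne_zero hπ hπ)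
  rwa [show 2 * √π / (√π * √π) = 2 / √π by field_simp] at h

theorem two_div_sqrt_pi_le_chooseFourMulSeq (m : ℕ) : 2 / √π ≤ chooseFourMulSeq m := by
  refine le_of_tendsto tendsto_two_mul_stirlingSeq_div
    (eventually_atTop.2 ⟨max m 1, fun n hn => ?_⟩)
  rw [← choose_four_mul_mul_sqrt_eq (by omega)]
  calc ((4 * n).choose n : ℝ) * √(6 * n) * (27 / 256) ^ n ≤ chooseFourMulSeq n := by
        unfold chooseFourMulSeq
        gcongr
        linarith
    _ ≤ chooseFourMulSeq m := chooseFourMulSeq_antitone (le_of_max_le_left hn)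

theorem sqrt_mul_pow_le_choose_four_mul (m : ℕ) :
    √(2 / (3 * π * (m + 1))) * (256 / 27) ^ m ≤ (4 * m).choose m := by
  have hsqrt : √(2 / (3 * π * (m + 1))) = 2 / √π / √(6 * (m + 1)) := by
    rw [Real.sqrt_eq_iff_eq_sq (by positivity) (by positivity), div_pow, div_pow,
      Real.sq_sqrt Real.pi_pos.le, Real.sq_sqrt (by positivity)]
    field_simp
    ring
  have hq : (27 / 256 : ℝ) ^ m * (256 / 27) ^ m = 1 := by rw [← mul_pow]; norm_num
  have hr : √(6 * ((m : ℝ) + 1)) ≠ 0 := (Real.sqrt_pos.2 (by positivity)).ne'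
  calc √(2 / (3 * π * (m + 1))) * (256 / 27) ^ m
      = 2 / √π / √(6 * (m + 1)) * (256 / 27) ^ m := by rw [hsqrt]
    _ ≤ chooseFourMulSeq m / √(6 * (m + 1)) * (256 / 27) ^ m := by
        gcongr
        exact two_div_sqrt_pi_le_chooseFourMulSeq m
    _ = (4 * m).choose m * ((27 / 256) ^ m * (256 / 27) ^ m) *
          (√(6 * (m + 1)) / √(6 * (m + 1))) := by
        rw [chooseFourMulSeq]; ring
    _ = (4 * m).choose m := by rw [hq, div_self hr, mul_one, mul_one]

theorem V1_succ_gt (a : ℕ → ℕ → ℚ) {m : ℕ} (hm : m ≠ 0) {β : ℝ} (hβ : 0 < β)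
    (ha : ∀ k < 3 * m, β ≤ a m k) :
    √(2 / (3 * π * (m + 1))) * (8 / 3) ^ (4 * m) * β < V1 a (m + 1) := by
  rw [V1, show 6 * (m + 1) - 6 = 2 * (3 * m) by omega, show 4 * (m + 1) - 4 = 4 * m by omega,
    show m + 1 - 1 = m by omega, show 3 * (m + 1) - 3 = 3 * m by omega,
    show 2 * (m + 1) - 2 = 2 * m by omega]
  set T := ∑ k ∈ Finset.range (3 * m), ((2 * (3 * m)).choose (2 * k + 1) : ℝ) * (a m k : ℝ)
  have hsum : β * 4 ^ (3 * m) ≤ 2 * T := mul_four_pow_le_two_mul_sum_choose_odd_mul (by omega) ha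
  have hpow : (8 / 3 : ℝ) ^ (4 * m) =
      (256 / 27) ^ m * (2 / (3 ^ m * 2 ^ (2 * m))) * (4 ^ (3 * m) / 2) := by
    rw [pow_mul, pow_mul, pow_mul]
    field_simp
    rw [← mul_pow, ← mul_pow, ← mul_pow]
    norm_num
  have hlow : √(2 / (3 * π * (m + 1))) * (8 / 3) ^ (4 * m) * β ≤
      (4 * m).choose m * (2 / (3 ^ m * 2 ^ (2 * m))) * T := by
    calc √(2 / (3 * π * (m + 1))) * (8 / 3) ^ (4 * m) * β
        = √(2 / (3 * π * (m + 1))) * (256 / 27) ^ m * (2 / (3 ^ m * 2 ^ (2 * m))) *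
            (β * 4 ^ (3 * m) / 2) := by rw [hpow]; ring
      _ ≤ (4 * m).choose m * (2 / (3 ^ m * 2 ^ (2 * m))) * T := by
          gcongr
          · exact sqrt_mul_pow_le_choose_four_mul m
          · linarith
  have hpos : 0 < √(2 / (3 * π * (m + 1))) * (8 / 3) ^ (4 * m) * β := by positivity
  calc √(2 / (3 * π * (m + 1))) * (8 / 3) ^ (4 * m) * β
      ≤ (4 * m).choose m * (2 / (3 ^ m * 2 ^ (2 * m))) * T := hlow
    _ < zetaR (2 * (3 * m)) * ((4 * m).choose m * (2 / (3 ^ m * 2 ^ (2 * m))) * T) :=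
        lt_mul_of_one_lt_left (hpos.trans_le hlow) (one_lt_zetaR (by omega))
    _ = _ := by ring

/-- the lower bound
`V1(g) > √(2/(3πg))·(8/3)^(4g-4)·(1 - 2/(6g-7))` for all `g ≥ 2`. -/
theorem stmt19 (a : ℕ → ℕ → ℚ) (ha : ∀ g : ℕ, 1 ≤ g → IsCorr g (a g))
    (g : ℕ) (hg : 2 ≤ g) :
    Real.sqrt (2 / (3 * π * g)) * (8 / 3) ^ (4 * g - 4) * (1 - 2 / (6 * (g : ℝ) - 7))
      < V1 a g := by
  obtain ⟨m, rfl⟩ : ∃ m, g = m + 1 := ⟨g - 1, by omega⟩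
  have hm : 1 ≤ m := by omega
  have hβ : (0 : ℝ) < 1 - 2 / (6 * m - 1) := by
    have : (1 : ℝ) ≤ m := by exact_mod_cast hm
    rw [sub_pos, div_lt_one (by linarith)]
    linarith
  have hbound : ∀ k < 3 * m, 1 - 2 / (6 * (m : ℝ) - 1) ≤ a m k := fun k hk => by
    exact_mod_cast (ha m hm).lower_bound hm (by omega)
  rw [show 4 * (m + 1) - 4 = 4 * m by omega]
  convert V1_succ_gt a (by omega) hβ hbound using 3 <;> push_cast <;> ring
end
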